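/- arXiv:2404.02559 — 6 statements merged into one kernel-verified Lean document; each statement's English description precedes it below -/
import Mathlib

section
/- Let V be a 2-dimensional Q-vector subspace of C (spanned by two R-linearly independent complex numbers). If V contains two distinct right angles, i.e. there exist two pairs (v1,v2) and (w1,w2) of R-linearly independent elements of V, defining distinct angles, with v2/v1 and w2/w1 purely imaginary, then V is homothetic to an imaginary quadratic field, i.e. there exists λ ∈ C* such that λV is an imaginary quadratic subfield of C. -/
/-!
Rescale by `v₁⁻¹`: the space becomes `ℚ + ℚu` with `u = v₂ / v₁` purely imaginary, say `u = it`.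
Writing `w₁ / v₁ = p + qu` and `w₂ / v₁ = r + su`, the right angle at `(w₁, w₂)` reads
`pr + qst² = 0`. If `qs = 0` then also `pr = 0`, and `(w₁, w₂)` would be a rational rescaling of
`(v₁, v₂)` or of `(v₂, v₁)`, i.e. the same angle. So `t² = -pr/(qs)` is rational, hence `u² ∈ ℚ`
and `ℚ + ℚu = ℚ(u)` is an imaginary quadratic field.
-/

open IntermediateField Polynomial Submodule

theorem finrank_span_pair {K V : Type*} [DivisionRing K] [AddCommGroup V] [Module K V] {x y : V}
    (h : LinearIndependent K ![x, y]) : Module.finrank K (span K {x, y}) = 2 := by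
  rw [← Matrix.range_cons_cons_empty x y ![], finrank_span_eq_card h, Fintype.card_fin]

theorem span_pair_eq_span_pair_of_mem {K V : Type*} [DivisionRing K] [AddCommGroup V] [Module K V]
    {a b x y : V} (hab : LinearIndependent K ![a, b]) (hxy : LinearIndependent K ![x, y])
    (hx : x ∈ span K {a, b}) (hy : y ∈ span K {a, b}) : span K {a, b} = span K {x, y} := by
  have : FiniteDimensional K (span K {a, b}) := FiniteDimensional.span_of_finite K (by simp)
  refine (Submodule.eq_of_le_of_finrank_eq ?_ ?_).symm
  · rw [span_le, Set.insert_subset_iff, Set.singleton_subset_iff]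
    exact ⟨hx, hy⟩
  · rw [finrank_span_pair hab, finrank_span_pair hxy]

section QuadraticGenerator

variable {K L : Type*} [Field K] [Field L] [Algebra K L] {u : L}

theorem linearIndependent_one_of_notMem_range (hu : u ∉ Set.range (algebraMap K L)) :
    LinearIndependent K ![1, u] :=
  (LinearIndependent.pair_iff' one_ne_zero).2 fun a ha ↦
    hu ⟨a, by rwa [Algebra.algebraMap_eq_smul_one]⟩

theorem isIntegral_of_sq_mem_range (hsq : u ^ 2 ∈ Set.range (algebraMap K L)) : IsIntegral K u := by
  obtain ⟨c, hc⟩ := hsq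
  exact ⟨X ^ 2 - C c, monic_X_pow_sub_C c two_ne_zero, by simp [hc]⟩

theorem natDegree_minpoly_eq_two (hu : u ∉ Set.range (algebraMap K L))
    (hsq : u ^ 2 ∈ Set.range (algebraMap K L)) : (minpoly K u).natDegree = 2 := by
  obtain ⟨c, hc⟩ := hsq
  have hle : (minpoly K u).degree ≤ (X ^ 2 - C c : K[X]).degree :=
    minpoly.degree_le_of_ne_zero K u (monic_X_pow_sub_C c two_ne_zero).ne_zero (by simp [hc])
  rw [degree_X_pow_sub_C two_pos] at hle
  have hge := (minpoly.two_le_natDegree_iff (isIntegral_of_sq_mem_range ⟨c, hc⟩)).2 hu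
  have := natDegree_le_of_degree_le hle
  omega

theorem finrank_adjoin_simple_eq_two (hu : u ∉ Set.range (algebraMap K L))
    (hsq : u ^ 2 ∈ Set.range (algebraMap K L)) : Module.finrank K K⟮u⟯ = 2 := by
  rw [adjoin.finrank (isIntegral_of_sq_mem_range hsq), natDegree_minpoly_eq_two hu hsq]

theorem coe_adjoin_simple_eq_span_pair (hu : u ∉ Set.range (algebraMap K L))
    (hsq : u ^ 2 ∈ Set.range (algebraMap K L)) : (K⟮u⟯ : Set L) = span K {1, u} := by
  have : FiniteDimensional K K⟮u⟯ := adjoin.finiteDimensional (isIntegral_of_sq_mem_range hsq)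
  suffices span K {1, u} = Subalgebra.toSubmodule K⟮u⟯.toSubalgebra from
    congrArg (fun S : Submodule K L ↦ (S : Set L)) this.symm
  refine Submodule.eq_of_le_of_finrank_eq ?_ ?_
  · rw [span_le, Set.insert_subset_iff, Set.singleton_subset_iff]
    exact ⟨one_mem K⟮u⟯, mem_adjoin_simple_self K u⟩
  · rw [finrank_span_pair (linearIndependent_one_of_notMem_range hu),
      Subalgebra.finrank_toSubmodule]
    exact (finrank_adjoin_simple_eq_two hu hsq).symm

end QuadraticGenerator

namespace Complex

theorem re_div_eq_zero_iff {z w : ℂ} (hw : w ≠ 0) :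
    (z / w).re = 0 ↔ z.re * w.re + z.im * w.im = 0 := by
  rw [div_re, ← add_div, div_eq_zero_iff, or_iff_left (normSq_pos.2 hw).ne']

theorem re_div_eq_zero_iff_of_re_eq_zero {u : ℂ} (hu : u.re = 0) {p q r s : ℝ}
    (hw : (p : ℂ) + q * u ≠ 0) :
    ((r + s * u) / (p + q * u)).re = 0 ↔ p * r + q * s * u.im ^ 2 = 0 := by
  rw [re_div_eq_zero_iff hw]
  simp only [add_re, add_im, mul_re, mul_im, ofReal_re, ofReal_im, hu]
  constructor <;> intro h <;> linarith

theorem sq_eq_neg_im_sq_of_re_eq_zero {u : ℂ} (hu : u.re = 0) : u ^ 2 = -((u.im ^ 2 : ℝ) : ℂ) := by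
  apply Complex.ext <;> simp [sq, hu]

end Complex

theorem sq_mem_range_algebraMap_of_right_angle {u : ℂ} (hu : u.re = 0) {p q r s : ℚ}
    (h : (p * r : ℝ) + q * s * u.im ^ 2 = 0) (hqs : q * s ≠ 0) :
    u ^ 2 ∈ Set.range (algebraMap ℚ ℂ) := by
  have hqs' : (q * s : ℝ) ≠ 0 := by exact_mod_cast hqs
  have him : u.im ^ 2 = ((-(p * r) / (q * s) : ℚ) : ℝ) := by
    push_cast
    rw [eq_div_iff hqs']
    linear_combination h
  refine ⟨-(-(p * r) / (q * s)), ?_⟩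
  rw [Complex.sq_eq_neg_im_sq_of_re_eq_zero hu, him, map_neg, Complex.ofReal_ratCast]
  rfl

theorem mul_ne_zero_of_distinct_angles {v₁ v₂ : ℂ} {t : ℝ} {p q r s : ℚ}
    (hw₁ : p • v₁ + q • v₂ ≠ 0) (hw₂ : r • v₁ + s • v₂ ≠ 0) (h : (p * r : ℝ) + q * s * t = 0)
    (hdist : ¬ ∃ q₁ q₂ : ℚ, q₁ ≠ 0 ∧ q₂ ≠ 0 ∧
      ((p • v₁ + q • v₂ = (q₁ : ℂ) * v₁ ∧ r • v₁ + s • v₂ = (q₂ : ℂ) * v₂) ∨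
        (p • v₁ + q • v₂ = (q₁ : ℂ) * v₂ ∧ r • v₁ + s • v₂ = (q₂ : ℂ) * v₁))) :
    q * s ≠ 0 := by
  intro hqs
  have hpr : p * r = 0 := by
    exact_mod_cast (by simpa [← Rat.cast_mul, hqs] using h : (p * r : ℝ) = 0)
  rcases mul_eq_zero.1 hqs with rfl | rfl
  · have hp : p ≠ 0 := by rintro rfl; simp at hw₁
    obtain rfl : r = 0 := (mul_eq_zero.1 hpr).resolve_left hp
    have hs : s ≠ 0 := by rintro rfl; simp at hw₂
    exact hdist ⟨p, s, hp, hs, .inl ⟨by simp [Rat.smul_def], by simp [Rat.smul_def]⟩⟩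
  · have hr : r ≠ 0 := by rintro rfl; simp at hw₂
    obtain rfl : p = 0 := (mul_eq_zero.1 hpr).resolve_right hr
    have hq : q ≠ 0 := by rintro rfl; simp at hw₁
    exact hdist ⟨q, r, hq, hr, .inr ⟨by simp [Rat.smul_def], by simp [Rat.smul_def]⟩⟩

theorem exists_imaginaryQuadratic_subfield_coe_eq_span_pair {u : ℂ} (hu : u.im ≠ 0)
    (hsq : u ^ 2 ∈ Set.range (algebraMap ℚ ℂ)) :
    ∃ K : Subfield ℂ, Module.finrank ℚ K = 2 ∧ (∃ z ∈ K, z.im ≠ 0) ∧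
      (K : Set ℂ) = span ℚ {1, u} := by
  have hu' : u ∉ Set.range (algebraMap ℚ ℂ) := by
    rintro ⟨c, rfl⟩
    simp at hu
  exact ⟨ℚ⟮u⟯.toSubfield, finrank_adjoin_simple_eq_two hu' hsq,
    ⟨u, mem_adjoin_simple_self ℚ u, hu⟩, coe_adjoin_simple_eq_span_pair hu' hsq⟩

theorem image_mul_left_span (R : Type*) {A : Type*} [CommSemiring R] [Semiring A] [Algebra R A]
    (l : A) (s : Set A) : (l * ·) '' (span R s : Set A) = span R ((l * ·) '' s) := by
  change LinearMap.mulLeft R l '' _ = span R (LinearMap.mulLeft R l '' s)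
  rw [span_image, map_coe]

/-- Let `V` be a space (the `ℚ`-span in `ℂ` of two `ℝ`-linearly independent
complex numbers).  If `V` contains two distinct right angles — two pairs `(v₁, v₂)`, `(w₁, w₂)`
of `ℝ`-linearly independent elements of `V`, defining distinct angles, with `v₂/v₁` and
`w₂/w₁` purely imaginary — then `V` is homothetic to an imaginary quadratic field:
there are `l ∈ ℂ*` and a subfield `K` of `ℂ` with `[K : ℚ] = 2` and `K ⊄ ℝ`
such that `l • V = K`. -/
theorem two_right_angles_CM (V : Submodule ℚ ℂ)
    (hV : ∃ a b : ℂ, LinearIndependent ℝ ![a, b] ∧ V = Submodule.span ℚ ({a, b} : Set ℂ))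
    (v₁ v₂ w₁ w₂ : ℂ)
    (hv₁ : v₁ ∈ V) (hv₂ : v₂ ∈ V) (hw₁ : w₁ ∈ V) (hw₂ : w₂ ∈ V)
    (hvind : LinearIndependent ℝ ![v₁, v₂]) (hwind : LinearIndependent ℝ ![w₁, w₂])
    (hvim : (v₂ / v₁).re = 0) (hwim : (w₂ / w₁).re = 0)
    (hdist : ¬ ∃ q₁ q₂ : ℚ, q₁ ≠ 0 ∧ q₂ ≠ 0 ∧
      ((w₁ = (q₁ : ℂ) * v₁ ∧ w₂ = (q₂ : ℂ) * v₂) ∨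
        (w₁ = (q₁ : ℂ) * v₂ ∧ w₂ = (q₂ : ℂ) * v₁))) :
    ∃ (l : ℂ) (K : Subfield ℂ), l ≠ 0 ∧ Module.finrank ℚ ↥K = 2 ∧
      (∃ z ∈ K, z.im ≠ 0) ∧ (fun z : ℂ => l * z) '' (V : Set ℂ) = (K : Set ℂ) := by
  obtain ⟨a, b, hab, rfl⟩ := hV
  have hv₁0 : v₁ ≠ 0 := by simpa using hvind.ne_zero 0
  have hv₂0 : v₂ ≠ 0 := by simpa using hvind.ne_zero 1
  have hw₁0 : w₁ ≠ 0 := by simpa using hwind.ne_zero 0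
  have hw₂0 : w₂ ≠ 0 := by simpa using hwind.ne_zero 1
  rw [span_pair_eq_span_pair_of_mem (hab.restrict_scalars' ℚ) (hvind.restrict_scalars' ℚ) hv₁ hv₂]
    at hw₁ hw₂ ⊢
  obtain ⟨p, q, rfl⟩ := mem_span_pair.1 hw₁
  obtain ⟨r, s, rfl⟩ := mem_span_pair.1 hw₂
  set u := v₂ / v₁
  have hcoord (x y : ℚ) : (x • v₁ + y • v₂) / v₁ = ((x : ℝ) : ℂ) + ((y : ℝ) : ℂ) * u := by
    simp only [Rat.smul_def, Complex.ofReal_ratCast, u]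
    field_simp
  rw [← div_div_div_cancel_right₀ hv₁0, hcoord, hcoord,
    Complex.re_div_eq_zero_iff_of_re_eq_zero hvim (hcoord p q ▸ div_ne_zero hw₁0 hv₁0)] at hwim
  have hu : u.im ≠ 0 := fun h ↦ div_ne_zero hv₂0 hv₁0 (Complex.ext hvim h)
  obtain ⟨K, hK, hKim, hKspan⟩ := exists_imaginaryQuadratic_subfield_coe_eq_span_pair hu
    (sq_mem_range_algebraMap_of_right_angle hvim hwim
      (mul_ne_zero_of_distinct_angles hw₁0 hw₂0 hwim hdist))
  refine ⟨v₁⁻¹, K, inv_ne_zero hv₁0, hK, hKim, ?_⟩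
  rw [image_mul_left_span, Set.image_pair, inv_mul_cancel₀ hv₁0, inv_mul_eq_div, hKspan]
end

section
/- For every n ≥ 3, a 2-dimensional Q-subspace V of C contains a 'rational n-tuple' if and only if V contains n points p_1,...,p_n that are the vertices of a simple (non-self-intersecting) n-gon all of whose angles are rational multiples of π and no two of whose sides are parallel. -/
/-!
Write `angleUnit z = z / conj z`; the angle of `v, w` is rational iff `angleUnit (v / w)` is a
root of unity, and `angleUnit` is multiplicative, so rationality of angles is transitive.
Hence the sides of a rational polygon form a rational tuple.

Conversely, `V` has `ℚ`-dimension two, so each vector of a rational `n`-tuple (`n ≥ 3`) lies in the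
span of two others, and a generic combination of these relations is a relation `∑ cᵢ vᵢ = 0` with
all `cᵢ ≠ 0`. The vectors `cᵢ vᵢ` still form a rational tuple; sorted by argument they are the sides
of a convex polygon with vertices in `V`. Convexity: lifting the arguments to an increasing
sequence that gains `2π` per turn, the cross products of side `k` with the sides following it
change sign once, from `+` to `-`, and add up to `0`; so their partial sums, the distances of the
other vertices from the line of side `k`, are positive. A polygon having, for every side, all other
vertices strictly on the same side of its line is simple.
-/

open Complex

/-- Two `ℝ`-linearly independent complex numbers `v, w` form a rational angle: the argument of
`v/w` is a rational multiple of `π`, i.e. `(v/w)/conj(v/w)` is a root of unity. -/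
def RationalAngle (v w : ℂ) : Prop :=
  LinearIndependent ℝ ![v, w] ∧
    ∃ k : ℕ, 0 < k ∧ ((v / w) / (starRingEnd ℂ) (v / w)) ^ k = 1

open ComplexConjugate Fin.NatCast Real

attribute [local instance] Complex.finrank_real_complex_fact

local notation "ω" => Complex.orientation.areaForm

noncomputable def angleUnit (z : ℂ) : ℂ := z / conj z

lemma angleUnit_mul (z w : ℂ) : angleUnit (z * w) = angleUnit z * angleUnit w := by
  simp only [angleUnit, map_mul, mul_div_mul_comm]

lemma angleUnit_div (z w : ℂ) : angleUnit (z / w) = angleUnit z / angleUnit w := by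
  simp only [angleUnit, map_div₀, div_div_div_comm]

lemma angleUnit_ofReal {r : ℝ} (hr : r ≠ 0) : angleUnit r = 1 := by
  simp [angleUnit, hr]

lemma angleUnit_one : angleUnit 1 = 1 := by
  simp [angleUnit]

lemma rationalAngle_iff {v w : ℂ} :
    RationalAngle v w ↔ LinearIndependent ℝ ![v, w] ∧ IsOfFinOrder (angleUnit (v / w)) := by
  rw [isOfFinOrder_iff_pow_eq_one]
  rfl

lemma isOfFinOrder_angleUnit_div_trans {a b c : ℂ} (hb : b ≠ 0)
    (hab : IsOfFinOrder (angleUnit (a / b))) (hbc : IsOfFinOrder (angleUnit (b / c))) :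
    IsOfFinOrder (angleUnit (a / c)) := by
  simpa [← angleUnit_mul, div_mul_div_cancel₀ hb] using hab.mul hbc

lemma isOfFinOrder_angleUnit_div_symm {a b : ℂ} (h : IsOfFinOrder (angleUnit (a / b))) :
    IsOfFinOrder (angleUnit (b / a)) := by
  obtain ⟨k, hk, hk1⟩ := isOfFinOrder_iff_pow_eq_one.1 h
  refine isOfFinOrder_iff_pow_eq_one.2 ⟨k, hk, ?_⟩
  rw [angleUnit_div, ← inv_div, ← angleUnit_div, inv_pow, hk1, inv_one]

lemma isOfFinOrder_angleUnit_div_of_succ {n : ℕ} [NeZero n] {f : Fin n → ℂ} (hf : ∀ i, f i ≠ 0)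
    (h : ∀ i, IsOfFinOrder (angleUnit (f i / f (i + 1)))) (i j : Fin n) :
    IsOfFinOrder (angleUnit (f i / f j)) := by
  obtain ⟨m, rfl⟩ := Nat.exists_eq_succ_of_ne_zero (NeZero.ne n)
  have from_zero : ∀ i, IsOfFinOrder (angleUnit (f 0 / f i)) := by
    refine Fin.induction ?_ fun i hi => ?_
    · rw [div_self (hf 0), angleUnit_one]
      exact IsOfFinOrder.one
    · simpa [Fin.coeSucc_eq_succ] using isOfFinOrder_angleUnit_div_trans (hf _) hi (h i.castSucc)
  exact isOfFinOrder_angleUnit_div_trans (hf 0) (isOfFinOrder_angleUnit_div_symm (from_zero i))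
    (from_zero j)

lemma linearIndependent_pair_iff_areaForm_ne_zero {z w : ℂ} :
    LinearIndependent ℝ ![z, w] ↔ ω z w ≠ 0 := by
  rw [LinearIndependent.pair_iff]
  constructor
  · intro h hzw
    have hz : z ≠ 0 := by
      rintro rfl
      simpa using h 1 0 (by simp)
    have hrel : (conj z * w).re • z + (-normSq z) • w = 0 := by
      rw [Complex.areaForm] at hzw
      have : conj z * w = (conj z * w).re := Complex.ext (by simp) (by simpa using hzw)
      rw [real_smul, real_smul, ofReal_neg, mul_comm, ← this, normSq_eq_conj_mul_self]
      ring
    exact hz (normSq_eq_zero.1 (neg_eq_zero.1 (h _ _ hrel).2))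
  · intro h s t hst
    have h1 := congrArg (ω z) hst
    have h2 := congrArg (ω w) hst
    simp only [map_add, map_smul, Orientation.areaForm_apply_self, smul_eq_mul, mul_zero,
      map_zero, add_zero, zero_add] at h1 h2
    rw [Orientation.areaForm_swap] at h2
    exact ⟨(mul_eq_zero.1 h2).resolve_right (neg_ne_zero.2 h), (mul_eq_zero.1 h1).resolve_right h⟩

lemma areaForm_eq_norm_mul_norm_mul_sin (z w : ℂ) :
    ω z w = ‖z‖ * ‖w‖ * Real.sin (arg w - arg z) := by
  rw [Complex.areaForm, Real.sin_sub]
  simp only [mul_im, conj_re, conj_im]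
  linear_combination (-(‖w‖ * Real.sin (arg w))) * norm_mul_cos_arg z - z.re * norm_mul_sin_arg w
    + (‖w‖ * Real.cos (arg w)) * norm_mul_sin_arg z + z.im * norm_mul_cos_arg w

lemma RationalAngle.real_smul {v w : ℂ} (h : RationalAngle v w) {r s : ℝ} (hr : r ≠ 0)
    (hs : s ≠ 0) : RationalAngle (r • v) (s • w) := by
  rw [rationalAngle_iff, linearIndependent_pair_iff_areaForm_ne_zero] at h ⊢
  refine ⟨?_, ?_⟩
  · rw [map_smul, map_smul, LinearMap.smul_apply, smul_eq_mul, smul_eq_mul]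
    exact mul_ne_zero hs (mul_ne_zero hr h.1)
  · rw [Complex.real_smul, Complex.real_smul, mul_div_mul_comm, angleUnit_mul, ← ofReal_div,
      angleUnit_ofReal (div_ne_zero hr hs), one_mul]
    exact h.2

lemma injective_arg_comp_of_pairwise_linearIndependent {ι : Type*} {v : ι → ℂ}
    (hli : Pairwise fun i j => LinearIndependent ℝ ![v i, v j]) : Function.Injective (arg ∘ v) := by
  intro i j hij
  by_contra hne
  refine linearIndependent_pair_iff_areaForm_ne_zero.1 (hli hne) ?_
  rw [areaForm_eq_norm_mul_norm_mul_sin, ← Function.comp_apply (f := arg), ← hij]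
  simp

lemma exists_perm_strictMono_arg {n : ℕ} {v : Fin n → ℂ}
    (hli : Pairwise fun i j => LinearIndependent ℝ ![v i, v j]) :
    ∃ σ : Equiv.Perm (Fin n), StrictMono (arg ∘ v ∘ σ) :=
  ⟨Tuple.sort (arg ∘ v), (Tuple.monotone_sort _).strictMono_of_injective
    ((injective_arg_comp_of_pairwise_linearIndependent hli).comp (Equiv.injective _))⟩

lemma exists_sum_smul_eq_zero_forall_ne_zero {K M ι : Type*} [Field K] [Infinite K] [Fintype ι]
    [AddCommGroup M] [Module K M] {a b : M} {v : ι → M} (hv : ∀ i, v i ∈ Submodule.span K {a, b})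
    (hli : Pairwise fun i j => LinearIndependent K ![v i, v j]) (hι : 3 ≤ Fintype.card ι) :
    ∃ c : ι → K, ∑ i, c i • v i = 0 ∧ ∀ i, c i ≠ 0 := by
  classical
  have key (k : ι) : ∃ c ∈ LinearMap.ker (Fintype.linearCombination K v),
      LinearMap.proj (R := K) (φ := fun _ => K) k c ≠ 0 := by
    obtain ⟨i, hi, j, hj, hij⟩ := (Finset.one_lt_card (s := Finset.univ.erase k)).1 (by
      rw [Finset.card_erase_of_mem (Finset.mem_univ k), Finset.card_univ]; omega)
    have hspan : Submodule.span K {v i, v j} = Submodule.span K {a, b} := by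
      have := FiniteDimensional.span_of_finite K (Set.toFinite {a, b})
      refine Submodule.eq_of_le_of_finrank_le ?_ ?_
      · rw [Submodule.span_le, Set.insert_subset_iff, Set.singleton_subset_iff]
        exact ⟨hv i, hv j⟩
      · have := finrank_span_eq_card (hli hij)
        rw [Matrix.range_cons, Matrix.range_cons_empty, Set.singleton_union] at this
        rw [this, Fintype.card_fin]
        exact (finrank_span_le_card _).trans (by simpa using Finset.card_le_two)
    obtain ⟨x, y, hxy⟩ := Submodule.mem_span_pair.1 (hspan ▸ hv k)
    refine ⟨Pi.single i x + Pi.single j y - Pi.single k 1, ?_, ?_⟩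
    · simp [Fintype.linearCombination_apply_single, hxy]
    · simp [Finset.ne_of_mem_erase hi, Finset.ne_of_mem_erase hj]
  obtain ⟨c, hc, hne⟩ := Module.Dual.exists_forall_mem_ne_zero_of_forall_exists _ _ key
  exact ⟨c, by simpa [Fintype.linearCombination_apply] using hc, hne⟩

lemma exists_rationalTuple_sum_eq_zero_strictMono_arg {n : ℕ} (hn : 3 ≤ n) {a b : ℂ}
    {v : Fin n → ℂ} (hvV : ∀ i, v i ∈ Submodule.span ℚ {a, b})
    (hv : ∀ i j, i ≠ j → RationalAngle (v i) (v j)) :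
    ∃ w : Fin n → ℂ, (∀ i, w i ∈ Submodule.span ℚ {a, b}) ∧
      (∀ i j, i ≠ j → RationalAngle (w i) (w j)) ∧ ∑ i, w i = 0 ∧ StrictMono (arg ∘ w) := by
  obtain ⟨c, hc, hc0⟩ := exists_sum_smul_eq_zero_forall_ne_zero hvV
    (fun i j hij => (hv i j hij).1.restrict_scalars' ℚ) (by simpa using hn)
  have hs (i j : Fin n) (hij : i ≠ j) : RationalAngle ((c i : ℝ) • v i) ((c j : ℝ) • v j) :=
    (hv i j hij).real_smul (by exact_mod_cast hc0 i) (by exact_mod_cast hc0 j)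
  obtain ⟨σ, hσ⟩ := exists_perm_strictMono_arg fun i j hij => (hs i j hij).1
  refine ⟨fun i => (c (σ i) : ℝ) • v (σ i), fun i => ?_,
    fun i j hij => hs _ _ (σ.injective.ne hij), ?_, hσ⟩
  · simp only [Rat.cast_smul_eq_qsmul]
    exact Submodule.smul_mem _ _ (hvV _)
  · simpa [Rat.cast_smul_eq_qsmul] using (Equiv.sum_comp σ (fun i => c i • v i)).trans hc

lemma strictMono_add_mul_div {n : ℕ} [NeZero n] {g : Fin n → ℝ} (hg : StrictMono g) {c L : ℝ}
    (hc : ∀ i, g i ∈ Set.Ioc c (c + L)) :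
    StrictMono fun a : ℕ => g (a : Fin n) + L * (a / n : ℕ) := by
  intro a b hab
  have hL : 0 < L := by linarith [(hc 0).1, (hc 0).2]
  rcases (Nat.div_le_div_right (c := n) hab.le).lt_or_eq with hdiv | hdiv
  · have : ((a / n : ℕ) : ℝ) + 1 ≤ (b / n : ℕ) := by exact_mod_cast hdiv
    nlinarith [(hc (a : Fin n)).2, (hc (b : Fin n)).1]
  · have hmod : (a : Fin n) < b := by
      rw [Fin.lt_def, Fin.val_natCast, Fin.val_natCast]
      have := Nat.div_add_mod a n
      have := Nat.div_add_mod b n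
      rw [hdiv] at *
      omega
    simpa [hdiv] using hg hmod

open Finset in
lemma sum_range_pos_of_sum_eq_zero {c : ℕ → ℝ} {N : ℕ} (hne : ∀ j < N, c j ≠ 0)
    (hneg : ∀ j j', j ≤ j' → j' < N → c j < 0 → c j' < 0) (hsum : ∑ j ∈ range N, c j = 0)
    {m : ℕ} (hm : 0 < m) (hmN : m < N) : 0 < ∑ j ∈ range m, c j := by
  by_cases hpos : ∀ j < m, 0 < c j
  · exact sum_pos (fun j hj => hpos j (mem_range.1 hj)) ⟨0, mem_range.2 hm⟩
  push Not at hpos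
  obtain ⟨j, hjm, hj⟩ := hpos
  have htail : ∑ j ∈ Ico m N, c j < 0 := by
    refine sum_neg (fun j' hj' => ?_) ⟨m, mem_Ico.2 ⟨le_rfl, hmN⟩⟩
    rw [mem_Ico] at hj'
    exact hneg j j' (by omega) hj'.2 (hj.lt_of_ne (hne j (by omega)))
  rw [← sum_range_add_sum_Ico _ hmN.le] at hsum
  linarith

lemma Real.sin_neg_of_sin_neg_of_le {θ θ' : ℝ} (hθ : 0 < θ) (hle : θ ≤ θ') (hθ' : θ' < 2 * π)
    (h : Real.sin θ < 0) : Real.sin θ' < 0 := by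
  have hπ : π < θ := by
    by_contra! hθπ
    exact h.not_ge (Real.sin_nonneg_of_nonneg_of_le_pi hθ.le hθπ)
  have := Real.sin_pos_of_pos_of_lt_pi (x := θ' - π) (by linarith) (by linarith)
  rwa [Real.sin_sub_pi, neg_pos] at this

lemma sum_range_natCast_add {M : Type*} [AddCommMonoid M] {n : ℕ} [NeZero n] (f : Fin n → M)
    (c : ℕ) : ∑ r ∈ Finset.range n, f ↑(c + r) = ∑ i, f i := by
  rw [← Fin.sum_univ_eq_sum_range (fun r => f ↑(c + r))]
  simp only [Nat.cast_add, Fin.cast_val_eq_self]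
  exact Equiv.sum_comp (Equiv.addLeft (c : Fin n)) f

lemma areaForm_sum_range_pos {n : ℕ} [NeZero n] {w : Fin n → ℂ}
    (hli : Pairwise fun i j => LinearIndependent ℝ ![w i, w j]) (harg : StrictMono (arg ∘ w))
    (hsum : ∑ i, w i = 0) (K : ℕ) {j : ℕ} (hj : 0 < j) (hjn : j < n - 1) :
    0 < ω (w K) (∑ r ∈ Finset.range j, w ↑(K + 1 + r)) := by
  -- `Θ` lifts the arguments of the periodic extension of `w` to a strictly increasing function
  -- gaining `2π` per period: `Θ (K + 1 + r) - Θ K` increases in `r` within `(0, 2π)`, so the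
  -- summands change sign at most once, from `+` to `-`.
  set Θ : ℕ → ℝ := fun a => arg (w a) + 2 * π * (a / n : ℕ) with hΘ
  have hΘmono : StrictMono Θ := strictMono_add_mul_div harg (c := -π)
    fun i => ⟨neg_pi_lt_arg (w i), (arg_le_pi (w i)).trans_eq (by ring)⟩
  have hΘn (a : ℕ) : Θ (a + n) = Θ a + 2 * π := by
    simp only [hΘ, Nat.cast_add, Fin.natCast_self, add_zero, Nat.add_div_right _ (NeZero.pos n)]
    push_cast
    ring
  have hsin (a b : ℕ) : ω (w a) (w b) = ‖w a‖ * ‖w b‖ * Real.sin (Θ b - Θ a) := by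
    rw [areaForm_eq_norm_mul_norm_mul_sin, hΘ]
    have : arg (w b) + 2 * π * ↑(b / n) - (arg (w a) + 2 * π * ↑(a / n)) =
        arg (w b) - arg (w a) + ((b / n : ℕ) - (a / n : ℕ) : ℤ) * (2 * π) := by
      simp only [Int.cast_sub, Int.cast_natCast]
      ring
    rw [this, Real.sin_add_int_mul_two_pi]
  have hne (r : ℕ) (hr : r < n - 1) : ω (w K) (w ↑(K + 1 + r)) ≠ 0 := by
    refine linearIndependent_pair_iff_areaForm_ne_zero.1 (hli fun h => ?_)
    rw [add_assoc, Nat.cast_add, left_eq_add, Fin.natCast_eq_zero] at h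
    exact Nat.not_dvd_of_pos_of_lt (by omega) (by omega) h
  have hrest : ∑ r ∈ Finset.range (n - 1), w ↑(K + 1 + r) = -w K := by
    have := sum_range_natCast_add w K
    rw [Finset.range_eq_Ico, Finset.sum_eq_sum_Ico_succ_bot (NeZero.pos n),
      Finset.sum_Ico_eq_sum_range, hsum] at this
    simp only [add_zero, zero_add, ← add_assoc] at this
    linear_combination this
  rw [map_sum]
  refine sum_range_pos_of_sum_eq_zero hne (fun r r' hrr' hr' hneg => ?_) ?_ hj hjn
  · have hδ : ∀ s, s < n - 1 → 0 < Θ (K + 1 + s) - Θ K ∧ Θ (K + 1 + s) - Θ K < 2 * π :=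
      fun s hs => ⟨sub_pos.2 (hΘmono (by omega)),
        by linarith [hΘn K, hΘmono (show K + 1 + s < K + n by omega)]⟩
    rw [hsin] at hneg ⊢
    have hr'ne := hne r' hr'
    rw [hsin] at hr'ne
    refine mul_neg_of_pos_of_neg ((by positivity : (0 : ℝ) ≤ _).lt_of_ne
      (left_ne_zero_of_mul hr'ne).symm) (Real.sin_neg_of_sin_neg_of_le (hδ r (by omega)).1 ?_
        (hδ r' hr').2 (neg_of_mul_neg_right hneg (by positivity)))
    linarith [hΘmono.monotone (show K + 1 + r ≤ K + 1 + r' by omega)]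
  · rw [← map_sum, hrest, map_neg, Orientation.areaForm_apply_self, neg_zero]

section cumulativeSum

variable {M : Type*} [AddCommGroup M] {n : ℕ} [NeZero n]

def cumulativeSum (w : Fin n → M) (i : Fin n) : M :=
  ∑ t ∈ Finset.range i, w t

lemma cumulativeSum_add_one_sub {w : Fin n → M} (hsum : ∑ i, w i = 0) (i : Fin n) :
    cumulativeSum w (i + 1) - cumulativeSum w i = w i := by
  obtain ⟨m, rfl⟩ := Nat.exists_eq_succ_of_ne_zero (NeZero.ne n)
  by_cases hi : i = Fin.last m
  · have hsum' : ∑ t ∈ Finset.range (m + 1), w t = 0 := by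
      rw [← Fin.sum_univ_eq_sum_range (fun t => w t)]
      simpa using hsum
    rw [Finset.sum_range_succ, Fin.natCast_eq_last] at hsum'
    subst hi
    simp only [cumulativeSum, Fin.last_add_one, Fin.val_zero, Finset.range_zero,
      Finset.sum_empty, Fin.val_last, zero_sub]
    exact (eq_neg_of_add_eq_zero_right hsum').symm
  · rw [cumulativeSum, cumulativeSum, Fin.val_add_one_of_lt (Fin.lt_last_iff_ne_last.2 hi),
      Finset.sum_range_succ, add_sub_cancel_left, Fin.cast_val_eq_self]

lemma cumulativeSum_add_natCast_sub {w : Fin n → M} (hsum : ∑ i, w i = 0) (a : Fin n) (j : ℕ) :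
    cumulativeSum w (a + j) - cumulativeSum w a = ∑ r ∈ Finset.range j, w (a + r) := by
  have := Finset.sum_range_sub (fun r : ℕ => cumulativeSum w (a + r)) j
  simp only [Nat.cast_succ, ← add_assoc, cumulativeSum_add_one_sub hsum, Nat.cast_zero,
    add_zero] at this
  exact this.symm

end cumulativeSum

/-- Every vertex other than the endpoints of side `k` lies strictly to the left of the line
through side `k`, oriented from `p k` to `p (k + 1)`. -/
def IsStrictlyConvexPolygon {n : ℕ} [NeZero n] (p : Fin n → ℂ) : Prop :=
  ∀ k m, m ≠ k → m ≠ k + 1 → ω (p (k + 1) - p k) (p k) < ω (p (k + 1) - p k) (p m)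

lemma isStrictlyConvexPolygon_cumulativeSum {n : ℕ} [NeZero n] {w : Fin n → ℂ}
    (hli : Pairwise fun i j => LinearIndependent ℝ ![w i, w j]) (harg : StrictMono (arg ∘ w))
    (hsum : ∑ i, w i = 0) : IsStrictlyConvexPolygon (cumulativeSum w) := by
  intro k m hmk hmk1
  set j := (m - (k + 1)).val
  have hjm : k + 1 + (j : Fin n) = m := by simp [j]
  have hj0 : 0 < j := by
    refine Nat.pos_of_ne_zero fun h => hmk1 ?_
    rw [← hjm, h, Nat.cast_zero, add_zero]
  have hjn : j < n - 1 := by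
    have : j + 1 ≠ n := fun h => hmk (by
      have := congrArg (fun x : ℕ => (x : Fin n)) h
      simp only [Nat.cast_add, Nat.cast_one, Fin.natCast_self] at this
      rw [← hjm, add_assoc, add_comm 1, this, add_zero])
    have := (m - (k + 1)).isLt
    omega
  have hpos := areaForm_sum_range_pos hli harg hsum k hj0 hjn
  simp only [Nat.cast_add, Fin.cast_val_eq_self, Nat.cast_one] at hpos
  rw [cumulativeSum_add_one_sub hsum, ← hjm, ← sub_pos, ← map_sub,
    ← sub_add_sub_cancel _ (cumulativeSum w (k + 1)), cumulativeSum_add_natCast_sub hsum,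
    cumulativeSum_add_one_sub hsum, map_add, Orientation.areaForm_apply_self, add_zero]
  exact hpos

lemma eq_left_of_mem_segment_of_le {E : Type*} [AddCommGroup E] [Module ℝ E] (f : E →ₗ[ℝ] ℝ)
    {x y z : E} (hxy : f x < f y) (hz : z ∈ segment ℝ x y) (hzx : f z ≤ f x) : z = x := by
  obtain ⟨a, b, ha, hb, hab, rfl⟩ := hz
  obtain rfl : b = 0 := by
    by_contra hb0
    have := mul_pos (hb.lt_of_ne' hb0) (sub_pos.2 hxy)
    have hfx : a * f x + b * f x = f x := by rw [← add_mul, hab, one_mul]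
    simp only [map_add, map_smul, smul_eq_mul] at hzx
    linarith
  obtain rfl : a = 1 := by simpa using hab
  simp

lemma IsStrictlyConvexPolygon.segment_inter_segment {n : ℕ} [NeZero n] (hn : 3 ≤ n)
    {p : Fin n → ℂ} (hp : IsStrictlyConvexPolygon p) {i j : Fin n} (hij : i ≠ j) :
    segment ℝ (p i) (p (i + 1)) ∩ segment ℝ (p j) (p (j + 1)) =
      if j = i + 1 then {p (i + 1)} else if i = j + 1 then {p i} else ∅ := by
  have hline (k : Fin n) : ∀ z ∈ segment ℝ (p k) (p (k + 1)),
      ω (p (k + 1) - p k) z = ω (p (k + 1) - p k) (p k) := by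
    refine fun z hz => (convex_hyperplane (LinearMap.isLinear _) _).segment_subset rfl ?_ hz
    rw [Set.mem_ofPred_eq, ← sub_eq_zero, ← map_sub, Orientation.areaForm_apply_self]
  have hadj (k : Fin n) :
      segment ℝ (p k) (p (k + 1)) ∩ segment ℝ (p (k + 1)) (p (k + 1 + 1)) = {p (k + 1)} := by
    have h1 : (1 : Fin n) ≠ 0 := by
      rw [Ne, Fin.one_eq_zero_iff]
      omega
    have h2 : (1 + 1 : Fin n) ≠ 0 := by
      have : ((2 : ℕ) : Fin n) ≠ 0 := by
        rw [Ne, Fin.natCast_eq_zero]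
        exact Nat.not_dvd_of_pos_of_lt (by norm_num) (by omega)
      simpa [one_add_one_eq_two] using this
    refine Set.Subset.antisymm (fun z ⟨hz, hz'⟩ =>
      eq_left_of_mem_segment_of_le (ω (p (k + 1) - p k)) ?_ hz' ?_) ?_
    · rw [hline k _ (right_mem_segment ..)]
      exact hp k _ (by rw [Ne, add_assoc, add_eq_left]; exact h2)
        (by rw [Ne, add_eq_left]; exact h1)
    · rw [hline k z hz, hline k _ (right_mem_segment ..)]
    · rw [Set.singleton_subset_iff]
      exact ⟨right_mem_segment .., left_mem_segment ..⟩
  split_ifs with hji hij'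
  · subst hji
    exact hadj i
  · subst hij'
    rw [Set.inter_comm]
    exact hadj j
  · refine Set.eq_empty_of_forall_notMem fun z ⟨hzi, hzj⟩ => ?_
    have := (convex_halfSpace_gt (LinearMap.isLinear (ω (p (j + 1) - p j))) _).segment_subset
      (hp j i hij hij') (hp j (i + 1) (Ne.symm hji) (by simpa using hij)) hzi
    exact this.ne' (hline j z hzj)

/-- For `n ≥ 3`, a space `V` (the `ℚ`-span in `ℂ` of two `ℝ`-linearly independent
complex numbers) contains a rational `n`-tuple if and only if it contains the vertices
`p₁, …, pₙ` of a simple (non-self-intersecting) `n`-gon all of whose angles are rational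
multiples of `π` and no two of whose sides are parallel.  Indices are taken cyclically in
`Fin n` via the cyclic successor `finRotate n`; the side leaving `p i` is
`p (finRotate n i) - p i`. -/
theorem rational_tuple_iff_rational_polygon (n : ℕ) (hn : 3 ≤ n) (V : Submodule ℚ ℂ)
    (hV : ∃ a b : ℂ, LinearIndependent ℝ ![a, b] ∧ V = Submodule.span ℚ ({a, b} : Set ℂ)) :
    (∃ v : Fin n → ℂ, (∀ i, v i ∈ V) ∧
        ∀ i j, i ≠ j → RationalAngle (v i) (v j)) ↔
    (∃ p : Fin n → ℂ, (∀ i, p i ∈ V) ∧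
        -- the polygon is simple: two sides meet exactly in a shared endpoint, if adjacent
        (∀ i j : Fin n, i ≠ j →
          segment ℝ (p i) (p (finRotate n i)) ∩ segment ℝ (p j) (p (finRotate n j)) =
            if j = finRotate n i then {p (finRotate n i)}
            else if i = finRotate n j then {p i} else ∅) ∧
        -- all angles of the polygon are rational multiples of π
        (∀ i : Fin n, RationalAngle (p (finRotate n i) - p i)
          (p (finRotate n (finRotate n i)) - p (finRotate n i))) ∧
        -- no two sides are parallel
        (∀ i j : Fin n, i ≠ j →
          LinearIndependent ℝ ![p (finRotate n i) - p i, p (finRotate n j) - p j])) := by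
  have : NeZero n := ⟨by omega⟩
  obtain ⟨a, b, -, rfl⟩ := hV
  simp only [finRotate_apply]
  have hsucc (i : Fin n) : i ≠ i + 1 := by
    rw [Ne, left_eq_add, Fin.one_eq_zero_iff]
    omega
  constructor
  · rintro ⟨v, hvV, hv⟩
    obtain ⟨w, hwV, hw, hwsum, harg⟩ := exists_rationalTuple_sum_eq_zero_strictMono_arg hn hvV hv
    have hwli : Pairwise fun i j => LinearIndependent ℝ ![w i, w j] := fun i j hij => (hw i j hij).1
    refine ⟨cumulativeSum w, fun i => Submodule.sum_mem _ fun t _ => hwV _,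
      fun i j hij => (isStrictlyConvexPolygon_cumulativeSum hwli harg hwsum).segment_inter_segment
        hn hij, fun i => ?_, fun i j hij => ?_⟩ <;>
      rw [cumulativeSum_add_one_sub hwsum, cumulativeSum_add_one_sub hwsum]
    · exact hw _ _ (hsucc i)
    · exact hwli hij
  · rintro ⟨p, hpV, -, hangle, hpar⟩
    refine ⟨fun i => p (i + 1) - p i, fun i => sub_mem (hpV _) (hpV _), fun i j hij => ?_⟩
    rw [rationalAngle_iff]
    refine ⟨hpar i j hij, isOfFinOrder_angleUnit_div_of_succ (fun i => ?_)
      (fun i => (rationalAngle_iff.1 (hangle i)).2) i j⟩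
    exact (hpar i (i + 1) (hsucc i)).ne_zero 0
end

section
/- The elliptic curve over Q with Weierstrass equation y² + xy + y = x³ + x² has Mordell–Weil group over Q cyclic of order 4, generated by the point (0,0). -/
/-- The Weierstrass curve `y² + xy + y = x³ + x²` over `ℚ`. -/
def W9 : WeierstrassCurve.Affine ℚ := { a₁ := 1, a₂ := 1, a₃ := 1, a₄ := 0, a₆ := 0 }

lemma W9_ns : W9.Nonsingular 0 0 := by
  simp only [WeierstrassCurve.Affine.nonsingular_iff, WeierstrassCurve.Affine.equation_iff, W9]
  norm_num

/-!
The substitution `X = 4x + 4`, `Y = 8y + 4x + 4` turns the curve into `Y² = X(X² - 7X + 16)`,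
whose only rational points with `X ∈ {0, 4}` are the images of `(0, 0)`, `(-1, 0)`, `(0, -1)`.
Writing `X = m / n²` in lowest terms, `m` and `m² - 7mn² + 16n⁴` are both squares or both twice
squares; the second case is impossible mod 16, so `m = u²` and `w² = u⁴ - 7u²n² + 16n⁴`.

For odd `u` this has no solution with `n ≠ 0`, by Fermat descent through the 2-isogenous curve
`Y² = X(X² + 14X - 15)`: `n` is even, `n = 2ν`, the two halves of `w ± (u² - 14ν²)` multiply to
`15ν⁴`, and the twists by `3`, `5`, `15` die mod 8, leaving `u² = s⁴ + 14s²t² - 15t⁴` with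
`st = ±ν`. Factoring `(s² + 7t²)² - u² = 64t⁴` the same way returns a solution `(u', n')` of
the first quartic with `|n'| ≤ |t| < |n|`.

For even `u = 2c`, the translation `X ↦ 16 / X` by the 2-torsion point swaps the roles of `u` and
`n`, which settles even `c`; for odd `c` the quartic is a Pythagorean triple
`(cn)² + (2(c² - n²))² = (w/2)²` whose parametrization gives a new solution with an even entry.
What survives is `u = 0` or `u² = 4n²`, i.e. `X ∈ {0, 4}`.
-/

namespace Int

theorem eq_pow_of_isCoprime_of_mul_eq_pow {a b c : ℤ} {k : ℕ} (hab : IsCoprime a b) (ha : 0 < a)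
    (h : a * b = c ^ k) : ∃ d, a = d ^ k := by
  obtain ⟨d, u, hu⟩ := exists_associated_pow_of_mul_eq_pow' hab h
  refine ⟨|d|, ?_⟩
  rw [← abs_of_pos ha, ← hu, abs_mul, abs_pow, isUnit_iff_abs_eq.mp u.isUnit, mul_one]

theorem isCoprime_of_mul_eq_mul_pow {a b c N : ℤ} {k : ℕ} (hN : Squarefree N)
    (hc : IsCoprime (a - b) c) (h : a * b = N * c ^ k) : IsCoprime a b := by
  refine IsRelPrime.isCoprime fun g hga hgb => hN g ?_
  have hgc : IsCoprime g (c ^ k) := (hc.of_isCoprime_of_dvd_left (dvd_sub hga hgb)).pow_right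
  exact (hgc.mul_left hgc).dvd_of_dvd_mul_right (h ▸ mul_dvd_mul hga hgb)

theorem exists_mul_pow_of_isCoprime_of_mul_eq {a b c N : ℤ} {k : ℕ} (hab : IsCoprime a b)
    (ha : 0 < a) (hb : 0 < b) (hN : 0 < N) (h : a * b = N * c ^ k) :
    ∃ d₁ d₂ s t : ℤ, d₁ * d₂ = N ∧ a = d₁ * s ^ k ∧ b = d₂ * t ^ k ∧ (s * t) ^ k = c ^ k := by
  set d₁ : ℤ := ↑(N.gcd a) with hd₁
  set d₂ : ℤ := ↑(N.gcd b) with hd₂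
  have hd : d₁ * d₂ = N := by
    have : N.natAbs ∣ a.natAbs * b.natAbs := by
      rw [← natAbs_mul, natAbs_dvd_natAbs, h]; exact dvd_mul_right N _
    rw [hd₁, hd₂, gcd_eq_natAbs, gcd_eq_natAbs, ← Nat.cast_mul,
      (Nat.gcd_mul_gcd_eq_iff_dvd_mul_of_coprime (isCoprime_iff_nat_coprime.mp hab)).mpr this,
      natAbs_of_nonneg hN.le]
  obtain ⟨α, hα⟩ : d₁ ∣ a := gcd_dvd_right N a
  obtain ⟨β, hβ⟩ : d₂ ∣ b := gcd_dvd_right N b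
  have hαβ : α * β = c ^ k := by
    refine mul_left_cancel₀ hN.ne' ?_
    rw [← h, ← hd, hα, hβ]; ring
  have hco : IsCoprime α β :=
    (hab.of_isCoprime_of_dvd_left (hα ▸ dvd_mul_left _ _)).of_isCoprime_of_dvd_right
      (hβ ▸ dvd_mul_left _ _)
  obtain ⟨s, rfl⟩ := eq_pow_of_isCoprime_of_mul_eq_pow hco
    (pos_of_mul_pos_right (hα ▸ ha) (by positivity)) hαβ
  obtain ⟨t, rfl⟩ := eq_pow_of_isCoprime_of_mul_eq_pow hco.symm
    (pos_of_mul_pos_right (hβ ▸ hb) (by positivity)) (mul_comm β _ ▸ hαβ)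
  exact ⟨d₁, d₂, s, t, hd, hα, hβ, by rw [mul_pow, hαβ]⟩

theorem exists_squarefree_mul_sq_of_mul_eq_sq {m K r : ℤ} (hm : 0 < m) (h : m * K = r ^ 2) :
    ∃ e u v : ℤ, Squarefree e ∧ m = e * u ^ 2 ∧ K = e * v ^ 2 := by
  obtain ⟨e, u, hmeu, he⟩ := Nat.sq_mul_squarefree m.natAbs
  have hm' : m = e * (u : ℤ) ^ 2 := by
    rw [← natAbs_of_nonneg hm.le, ← hmeu]; push_cast; ring
  have hu : (u : ℤ) ≠ 0 := by rintro hu; rw [hu, zero_pow two_ne_zero, mul_zero] at hm'; omega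
  obtain ⟨w, rfl⟩ : (u : ℤ) ∣ r := by
    rw [← pow_dvd_pow_iff two_ne_zero, ← h, hm']; exact ⟨e * K, by ring⟩
  have heK : e * K = w ^ 2 := by
    refine mul_left_cancel₀ (pow_ne_zero 2 hu) ?_
    rw [← mul_assoc, mul_comm _ (e : ℤ), ← hm', h]; ring
  have he' : Squarefree (e : ℤ) := squarefree_natCast.mpr he
  obtain ⟨v, rfl⟩ : (e : ℤ) ∣ w := (he'.dvd_pow_iff_dvd two_ne_zero).mp ⟨K, heK.symm⟩
  exact ⟨e, u, v, he', hm', mul_left_cancel₀ he'.ne_zero (by rw [heK]; ring)⟩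

end Int

theorem sq_eq_sq_of_pow_four_eq {R : Type*} [CommRing R] [LinearOrder R] [IsStrictOrderedRing R]
    {a b : R} (h : a ^ 4 = b ^ 4) : a ^ 2 = b ^ 2 :=
  (pow_left_inj₀ (sq_nonneg a) (sq_nonneg b) two_ne_zero).mp (by rw [← pow_mul, ← pow_mul]; exact h)

theorem Nat.exists_eq_sq_of_pow_three_eq_sq {a b : ℕ} (h : a ^ 3 = b ^ 2) : ∃ n, a = n ^ 2 := by
  rcases Nat.eq_zero_or_pos a with rfl | ha
  · exact ⟨0, rfl⟩
  obtain ⟨k, rfl⟩ : a ∣ b := by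
    rw [← Nat.pow_dvd_pow_iff two_ne_zero, ← h]; exact ⟨a, by ring⟩
  exact ⟨k, mul_left_cancel₀ (pow_ne_zero 2 ha.ne') (by rw [← pow_succ, h]; ring)⟩

/-- `w² = quartic u v` says that `u² / v²` is the `X`-coordinate of a rational point on
`Y² = X(X² - 7X + 16)`. -/
def quartic (u v : ℤ) : ℤ := u ^ 4 - 7 * u ^ 2 * v ^ 2 + 16 * v ^ 4

/-- The same for the 2-isogenous curve `Y² = X(X² + 14X - 15)`. -/
def dualQuartic (s t : ℤ) : ℤ := s ^ 4 + 14 * s ^ 2 * t ^ 2 - 15 * t ^ 4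

theorem quartic_two_mul_comm (a b : ℤ) : quartic (2 * a) b = quartic (2 * b) a := by
  unfold quartic; ring

theorem quartic_four_mul (c n : ℤ) : quartic (4 * c) n = 16 * quartic n c := by
  unfold quartic; ring

theorem sq_ne_quartic_of_odd_of_odd {u n : ℤ} (hu : Odd u) (hn : Odd n) (w : ℤ) :
    w ^ 2 ≠ quartic u n := by
  have key : ∀ a b w : ZMod 8,
      w ^ 2 ≠ (2 * a + 1) ^ 4 - 7 * (2 * a + 1) ^ 2 * (2 * b + 1) ^ 2 + 16 * (2 * b + 1) ^ 4 := by
    decide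
  obtain ⟨a, rfl⟩ := hu
  obtain ⟨b, rfl⟩ := hn
  intro h
  have h8 := congrArg (Int.cast : ℤ → ZMod 8) h
  push_cast [quartic] at h8
  exact key _ _ _ h8

theorem eq_one_of_mul_eq_fifteen {d₁ d₂ s t u : ℤ} (hd : d₁ * d₂ = 15) (hd₁ : 0 < d₁) (hu : Odd u)
    (h : d₁ * s ^ 4 - d₂ * t ^ 4 = u ^ 2 - 14 * s ^ 2 * t ^ 2) : d₁ = 1 := by
  have key : ∀ d₁ d₂ : ZMod 8, (d₁, d₂) ∈ [(3, 5), (5, 3), (15, 1)] → ∀ s t a : ZMod 8,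
      d₁ * s ^ 4 - d₂ * t ^ 4 ≠ (2 * a + 1) ^ 2 - 14 * s ^ 2 * t ^ 2 := by
    decide
  have hcases : d₁ = 1 ∧ d₂ = 15 ∨ d₁ = 3 ∧ d₂ = 5 ∨ d₁ = 5 ∧ d₂ = 3 ∨ d₁ = 15 ∧ d₂ = 1 := by
    have : d₁ ≤ 15 := Int.le_of_dvd (by norm_num) ⟨d₂, hd.symm⟩
    interval_cases d₁ <;> omega
  obtain ⟨a, rfl⟩ := hu
  have h8 := congrArg (Int.cast : ℤ → ZMod 8) h
  push_cast at h8
  rcases hcases with ⟨rfl, rfl⟩ | ⟨rfl, rfl⟩ | ⟨rfl, rfl⟩ | ⟨rfl, rfl⟩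
  · rfl
  all_goals exact absurd h8 (key _ _ (by decide) _ _ _)

theorem two_mul_sq_ne_of_odd {n : ℤ} (hn : Odd n) (u v : ℤ) :
    2 * v ^ 2 ≠ (2 * u ^ 2) ^ 2 - 7 * (2 * u ^ 2) * n ^ 2 + 16 * n ^ 4 := by
  have key : ∀ u b v : ZMod 16,
      v ^ 2 ≠ 2 * u ^ 4 - 7 * u ^ 2 * (2 * b + 1) ^ 2 + 8 * (2 * b + 1) ^ 4 := by
    decide
  obtain ⟨b, rfl⟩ := hn
  intro h
  have h16 := congrArg (Int.cast : ℤ → ZMod 16)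
    (show v ^ 2 = 2 * u ^ 4 - 7 * u ^ 2 * (2 * b + 1) ^ 2 + 8 * (2 * b + 1) ^ 4 by linarith)
  push_cast at h16
  exact key _ _ _ h16

theorem exists_dualQuartic_of_sq_eq_quartic {u ν w : ℤ} (hu : Odd u) (hν : ν ≠ 0)
    (hco : IsCoprime u ν) (h : w ^ 2 = quartic u (2 * ν)) :
    ∃ s t, u ^ 2 = dualQuartic s t ∧ s ^ 2 * t ^ 2 = ν ^ 2 := by
  have hW : Odd |w| := by
    have : Odd (quartic u (2 * ν)) := by
      rw [show quartic u (2 * ν) = u ^ 4 + 2 * (128 * ν ^ 4 - 14 * u ^ 2 * ν ^ 2) by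
        unfold quartic; ring]
      exact hu.pow.add_even (even_two_mul _)
    rwa [odd_abs, ← Int.odd_pow' two_ne_zero, h]
  rw [← sq_abs] at h
  set W := |w|
  obtain ⟨P, hP⟩ : Even (W + (u ^ 2 - 14 * ν ^ 2)) :=
    hW.add_odd (hu.pow.sub_even ⟨7 * ν ^ 2, by ring⟩)
  have hPQ : P * (W - P) = 15 * ν ^ 4 := by
    have : 4 * (P * (W - P)) = 4 * (15 * ν ^ 4) := by
      unfold quartic at h
      linear_combination h + (u ^ 2 - 14 * ν ^ 2 - W + 2 * P) * hP
    linarith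
  have hν4 : 0 < ν ^ 4 := by positivity
  have hPpos : 0 < P := by nlinarith [abs_nonneg w]
  have hQpos : 0 < W - P := by nlinarith
  have h15 : Squarefree (15 : ℤ) := by
    rw [show (15 : ℤ) = ((3 * 5 : ℕ) : ℤ) by norm_num, Int.squarefree_natCast]
    exact (Nat.squarefree_mul (by norm_num)).mpr
      ⟨Nat.prime_three.squarefree, Nat.prime_five.squarefree⟩
  have hdiff : P - (W - P) = u ^ 2 + -14 * ν * ν := by linear_combination -hP
  have hPQco : IsCoprime P (W - P) :=
    Int.isCoprime_of_mul_eq_mul_pow h15 (hdiff ▸ hco.pow_left.add_mul_right_left _) hPQ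
  obtain ⟨d₁, d₂, s, t, hd, rfl, hQ, hst⟩ :=
    Int.exists_mul_pow_of_isCoprime_of_mul_eq hPQco hPpos hQpos (by norm_num) hPQ
  have hst2 : s ^ 2 * t ^ 2 = ν ^ 2 := mul_pow s t 2 ▸ sq_eq_sq_of_pow_four_eq hst
  obtain rfl : d₁ = 1 := eq_one_of_mul_eq_fifteen (s := s) (t := t) hd
    (pos_of_mul_pos_left hPpos (by positivity)) hu (by linear_combination hdiff + hQ + 14 * hst2)
  refine ⟨s, t, ?_, hst2⟩
  unfold dualQuartic
  linear_combination -hdiff - hQ - 14 * hst2 - t ^ 4 * hd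

theorem exists_quartic_of_pow_four_add_pow_four_eq {g k s t : ℤ} (ht : t ≠ 0)
    (hodd : Odd (s ^ 2 + 7 * t ^ 2)) (hsum : g ^ 4 + k ^ 4 = s ^ 2 + 7 * t ^ 2)
    (hgk : g ^ 2 * k ^ 2 = 4 * t ^ 2) (hcop : IsCoprime g k) :
    ∃ A B, Odd A ∧ B ≠ 0 ∧ IsCoprime A B ∧ s ^ 2 = quartic A B ∧ B ^ 2 ≤ t ^ 2 := by
  wlog hge : Even g generalizing g k
  · exact this (by linear_combination hsum) (by linear_combination hgk) hcop.symm
      ((Int.even_or_odd k).resolve_right fun hk =>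
        Int.not_even_iff_odd.mpr (hsum ▸ hodd) ((Int.not_even_iff_odd.mp hge).pow.add_odd hk.pow))
  obtain ⟨g₁, rfl⟩ := hge
  have ht2 : t ^ 2 = g₁ ^ 2 * k ^ 2 := mul_left_cancel₀ four_ne_zero (by linear_combination -hgk)
  have hk : Odd k := Int.isCoprime_two_left.mp (hcop.of_isCoprime_of_dvd_left ⟨g₁, by ring⟩)
  have hg₁ : g₁ ≠ 0 := by rintro rfl; simp [ht] at ht2
  refine ⟨k, g₁, hk, hg₁, hcop.symm.of_isCoprime_of_dvd_right ⟨2, by ring⟩, ?_, ?_⟩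
  · unfold quartic; linear_combination -hsum - 7 * ht2
  · have : 1 ≤ k ^ 2 :=
      (one_le_sq_iff_one_le_abs k).mpr (Int.one_le_abs (by rintro rfl; simp at hk))
    nlinarith

theorem exists_quartic_of_sq_eq_dualQuartic {u s t : ℤ} (hu : Odd u) (ht : t ≠ 0)
    (hco : IsCoprime u t) (h : u ^ 2 = dualQuartic s t) :
    ∃ A B, Odd A ∧ B ≠ 0 ∧ IsCoprime A B ∧ s ^ 2 = quartic A B ∧ B ^ 2 ≤ t ^ 2 := by
  have hP2 : (s ^ 2 + 7 * t ^ 2) ^ 2 = u ^ 2 + 64 * t ^ 4 := by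
    unfold dualQuartic at h; linear_combination -h
  have hP : Odd (s ^ 2 + 7 * t ^ 2) := by
    rw [← Int.odd_pow' two_ne_zero, hP2]
    exact hu.pow.add_even ⟨32 * t ^ 4, by ring⟩
  obtain ⟨X, hX⟩ := hP.add_odd hu
  have hXY : X * (s ^ 2 + 7 * t ^ 2 - X) = (2 * t) ^ 4 := by
    have : 4 * (X * (s ^ 2 + 7 * t ^ 2 - X)) = 4 * (2 * t) ^ 4 := by
      linear_combination hP2 + (u - s ^ 2 - 7 * t ^ 2 + 2 * X) * hX
    linarith
  have ht4 : 0 < (2 * t) ^ 4 := by positivity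
  have hXpos : 0 < X := by nlinarith [sq_nonneg s, sq_nonneg t]
  have hYpos : 0 < s ^ 2 + 7 * t ^ 2 - X := by nlinarith
  have hXYco : IsCoprime X (s ^ 2 + 7 * t ^ 2 - X) := by
    refine Int.isCoprime_of_mul_eq_mul_pow squarefree_one ?_ (hXY.trans (one_mul _).symm)
    rw [show X - (s ^ 2 + 7 * t ^ 2 - X) = u by linear_combination -hX]
    exact (Int.isCoprime_two_right.mpr hu).mul_right hco
  obtain ⟨g, hg⟩ := Int.eq_pow_of_isCoprime_of_mul_eq_pow hXYco hXpos hXY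
  obtain ⟨k, hk⟩ := Int.eq_pow_of_isCoprime_of_mul_eq_pow hXYco.symm hYpos (mul_comm X _ ▸ hXY)
  refine exists_quartic_of_pow_four_add_pow_four_eq ht hP (by rw [← hg, ← hk]; ring) ?_
    ((IsCoprime.pow_iff (by norm_num) (by norm_num)).mp (hg ▸ hk ▸ hXYco))
  rw [← mul_pow, show 4 * t ^ 2 = (2 * t) ^ 2 by ring]
  exact sq_eq_sq_of_pow_four_eq (by rw [mul_pow, ← hg, ← hk, hXY])

theorem quartic_descent {u n w : ℤ} (hu : Odd u) (hn : n ≠ 0) (hco : IsCoprime u n)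
    (h : w ^ 2 = quartic u n) :
    ∃ u' n' w', Odd u' ∧ n' ≠ 0 ∧ IsCoprime u' n' ∧ w' ^ 2 = quartic u' n' ∧
      n'.natAbs < n.natAbs := by
  obtain ⟨ν, rfl⟩ : 2 ∣ n := even_iff_two_dvd.mp <| (Int.even_or_odd n).resolve_right
    fun hn' => sq_ne_quartic_of_odd_of_odd hu hn' w h
  have hν : ν ≠ 0 := right_ne_zero_of_mul hn
  obtain ⟨s, t, hst, hst2⟩ :=
    exists_dualQuartic_of_sq_eq_quartic hu hν (hco.of_isCoprime_of_dvd_right (dvd_mul_left ν 2)) h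
  obtain ⟨hs, ht⟩ : s ≠ 0 ∧ t ≠ 0 := by
    simpa using (hst2.trans_ne (pow_ne_zero 2 hν))
  have htν : t ∣ ν := (Int.pow_dvd_pow_iff two_ne_zero).mp ⟨s ^ 2, by rw [← hst2]; ring⟩
  obtain ⟨A, B, hA, hB, hAB, hsq, hBt⟩ := exists_quartic_of_sq_eq_dualQuartic hu ht
    (hco.of_isCoprime_of_dvd_right (htν.mul_left 2)) hst
  refine ⟨A, B, s, hA, hB, hAB, hsq, Int.natAbs_lt_iff_sq_lt.mpr ?_⟩
  have : 1 ≤ s ^ 2 := (one_le_sq_iff_one_le_abs s).mpr (Int.one_le_abs hs)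
  nlinarith [pow_pos (sq_pos_of_ne_zero ht) 1]

theorem sq_ne_quartic_of_odd {u n : ℤ} (hu : Odd u) (hn : n ≠ 0) (hco : IsCoprime u n) (w : ℤ) :
    w ^ 2 ≠ quartic u n := by
  intro h
  induction hN : n.natAbs using Nat.strong_induction_on generalizing u n w with
  | _ N ih =>
    obtain ⟨u', n', w', hu', hn', hco', h', hlt⟩ := quartic_descent hu hn hco h
    exact ih _ (hN ▸ hlt) hu' hn' hco' w' h' rfl

theorem eq_zero_of_sq_eq_quartic_two_mul_of_even {c n w : ℤ} (hc : Even c) (hco : IsCoprime c n)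
    (h : w ^ 2 = quartic (2 * c) n) : c = 0 := by
  obtain ⟨c₁, rfl⟩ := even_iff_two_dvd.mp hc
  rw [← mul_assoc, show (2 : ℤ) * 2 = 4 by norm_num, quartic_four_mul] at h
  obtain ⟨w', rfl⟩ : 4 ∣ w :=
    (Int.pow_dvd_pow_iff two_ne_zero).mp ⟨quartic n c₁, by rw [h]; norm_num⟩
  have hn : Odd n := Int.isCoprime_two_left.mp (hco.of_isCoprime_of_dvd_left (dvd_mul_right 2 c₁))
  have hc₁ : c₁ = 0 := by
    by_contra hc₁
    exact sq_ne_quartic_of_odd hn hc₁ (hco.symm.of_isCoprime_of_dvd_right (dvd_mul_left c₁ 2)) w'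
      (by linarith)
  rw [hc₁, mul_zero]

theorem sq_eq_sq_of_sq_eq_quartic_two_mul_of_odd {c n w : ℤ} (hc : Odd c) (hn : Odd n)
    (hco : IsCoprime c n) (h : w ^ 2 = quartic (2 * c) n) : c ^ 2 = n ^ 2 := by
  obtain ⟨z, rfl⟩ : 2 ∣ w := by
    rw [← Int.pow_dvd_pow_iff two_ne_zero, h]
    exact ⟨4 * c ^ 4 - 7 * c ^ 2 * n ^ 2 + 4 * n ^ 4, by unfold quartic; ring⟩
  have hcn : Odd (c * n) := hc.mul hn
  have hPT : PythagoreanTriple (c * n) (2 * (c ^ 2 - n ^ 2)) |z| := by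
    unfold PythagoreanTriple quartic at *
    rw [abs_mul_abs_self]
    linarith
  have hz : z ≠ 0 := by
    rintro rfl
    have : c * n = 0 := by
      unfold PythagoreanTriple at hPT
      simp only [abs_zero, mul_zero] at hPT
      nlinarith [mul_self_nonneg (c * n), mul_self_nonneg (2 * (c ^ 2 - n ^ 2))]
    simp [this] at hcn
  have hco' : IsCoprime (c * n) (2 * (c ^ 2 - n ^ 2)) := by
    refine (Int.isCoprime_two_right.mpr hcn).mul_right (IsCoprime.mul_left ?_ ?_)
    · rw [show c ^ 2 - n ^ 2 = -n ^ 2 + c * c by ring]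
      exact (hco.pow_right (n := 2)).neg_right.add_mul_left_right c
    · rw [show c ^ 2 - n ^ 2 = c ^ 2 + n * -n by ring]
      exact (hco.symm.pow_right (n := 2)).add_mul_left_right (-n)
  obtain ⟨p, q, hx, hy, -, hpq, hpar, -⟩ := PythagoreanTriple.coprime_classification' hPT
    (Int.isCoprime_iff_gcd_eq_one.mp hco') (Int.odd_iff.mp hcn) (abs_pos.mpr hz)
  have hy' : c ^ 2 - n ^ 2 = p * q := by linarith
  have hsq : (2 * (c ^ 2 + n ^ 2)) ^ 2 = quartic (2 * p) q := by
    unfold quartic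
    linear_combination 4 * (c ^ 2 - n ^ 2 + p * q) * hy' + 16 * (c * n + p ^ 2 - q ^ 2) * hx
  have hpq' : IsCoprime p q := Int.isCoprime_iff_gcd_eq_one.mpr hpq
  have : p * q = 0 := by
    rcases hpar with ⟨hp, -⟩ | ⟨-, hq⟩
    · rw [eq_zero_of_sq_eq_quartic_two_mul_of_even (Int.even_iff.mpr hp) hpq' hsq, zero_mul]
    · rw [eq_zero_of_sq_eq_quartic_two_mul_of_even (Int.even_iff.mpr hq) hpq'.symm
        (quartic_two_mul_comm p q ▸ hsq), mul_zero]
  linarith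

theorem eq_zero_or_sq_eq_of_sq_eq_quartic {u n w : ℤ} (hn : n ≠ 0) (hco : IsCoprime u n)
    (h : w ^ 2 = quartic u n) : u = 0 ∨ u ^ 2 = 4 * n ^ 2 := by
  rcases Int.even_or_odd u with hu | hu
  · obtain ⟨c, rfl⟩ := even_iff_two_dvd.mp hu
    have hcn : IsCoprime c n := hco.of_isCoprime_of_dvd_left (dvd_mul_left c 2)
    rcases Int.even_or_odd c with hc | hc
    · left
      rw [eq_zero_of_sq_eq_quartic_two_mul_of_even hc hcn h, mul_zero]
    · right
      have hn' : Odd n :=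
        Int.isCoprime_two_left.mp (hco.of_isCoprime_of_dvd_left (dvd_mul_right 2 c))
      linear_combination 4 * sq_eq_sq_of_sq_eq_quartic_two_mul_of_odd hc hn' hcn h
  · exact absurd h (sq_ne_quartic_of_odd hu hn hco w)

theorem eq_zero_or_eq_four_mul_sq {m n r : ℤ} (hn : n ≠ 0) (hco : IsCoprime m n)
    (h : r ^ 2 = m * (m ^ 2 - 7 * m * n ^ 2 + 16 * n ^ 4)) : m = 0 ∨ m = 4 * n ^ 2 := by
  have hn4 : 0 < n ^ 4 := by positivity
  have hK : 0 < m ^ 2 - 7 * m * n ^ 2 + 16 * n ^ 4 := by nlinarith [sq_nonneg (2 * m - 7 * n ^ 2)]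
  rcases (show 0 ≤ m by nlinarith [sq_nonneg r]).eq_or_lt with hm | hm
  · exact Or.inl hm.symm
  obtain ⟨e, u, v, he, rfl, hKe⟩ := Int.exists_squarefree_mul_sq_of_mul_eq_sq hm h.symm
  have he2 : e ∣ 2 := by
    have h16 : e ∣ 2 ^ 4 * n ^ 4 :=
      ⟨v ^ 2 - e * u ^ 4 + 7 * u ^ 2 * n ^ 2, by linear_combination hKe⟩
    have hen : IsCoprime e (n ^ 4) := (hco.of_isCoprime_of_dvd_left (dvd_mul_right e _)).pow_right
    exact (he.dvd_pow_iff_dvd four_ne_zero).mp (hen.dvd_of_dvd_mul_right h16)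
  have : e ≤ 2 := Int.le_of_dvd two_pos he2
  have : 0 < e := pos_of_mul_pos_left hm (sq_nonneg u)
  interval_cases e
  · have hun : IsCoprime u n := hco.of_isCoprime_of_dvd_left ⟨u, by ring⟩
    have := eq_zero_or_sq_eq_of_sq_eq_quartic hn hun (w := v)
      (by unfold quartic; linear_combination -hKe)
    rcases this with rfl | hu
    · exact Or.inl (by ring)
    · exact Or.inr (by linear_combination hu)
  · have hn' : Odd n := Int.isCoprime_two_left.mp (hco.of_isCoprime_of_dvd_left (dvd_mul_right 2 _))
    exact (two_mul_sq_ne_of_odd hn' u v hKe.symm).elim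

theorem eq_zero_or_eq_four_of_sq_eq {X Y : ℚ} (h : Y ^ 2 = X * (X ^ 2 - 7 * X + 16)) :
    X = 0 ∨ X = 4 := by
  set m := X.num
  set q : ℤ := ↑X.den with hq_def
  have hq : 0 < q := by positivity
  have hmq : IsCoprime m q := Int.isCoprime_iff_nat_coprime.mpr X.reduced
  have hX : X = m / q := (Rat.num_div_den X).symm
  have hY2 : Y ^ 2 = ((m * (m ^ 2 - 7 * m * q + 16 * q ^ 2) : ℤ) : ℚ) / ((q ^ 3 : ℤ) : ℚ) := by
    rw [h, hX]; push_cast; field_simp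
  have hcop : (m * (m ^ 2 - 7 * m * q + 16 * q ^ 2)).natAbs.Coprime (q ^ 3).natAbs := by
    rw [← Int.isCoprime_iff_nat_coprime]
    refine IsCoprime.pow_right (IsCoprime.mul_left hmq ?_)
    rw [show m ^ 2 - 7 * m * q + 16 * q ^ 2 = m ^ 2 + q * (16 * q - 7 * m) by ring]
    exact hmq.pow_left.add_mul_left_left _
  have hden : X.den ^ 3 = Y.den ^ 2 := by
    have := Rat.den_div_eq_of_coprime (by positivity) hcop
    rw [← hY2, Rat.den_pow, hq_def] at this
    exact_mod_cast this.symm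
  have hnum : Y.num ^ 2 = m * (m ^ 2 - 7 * m * q + 16 * q ^ 2) := by
    rw [← Rat.num_pow, hY2, Rat.num_div_eq_of_coprime (by positivity) hcop]
  obtain ⟨n, hn⟩ := Nat.exists_eq_sq_of_pow_three_eq_sq hden
  have hqn : q = (n : ℤ) ^ 2 := by rw [hq_def, hn]; push_cast; rfl
  have hn0 : (n : ℤ) ≠ 0 := by rintro h0; rw [h0] at hqn; omega
  rcases eq_zero_or_eq_four_mul_sq hn0 (hmq.of_isCoprime_of_dvd_right ⟨n, by rw [hqn]; ring⟩)
    (by rw [hnum, hqn]; ring) with hm | hm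
  · exact Or.inl (Rat.num_eq_zero.mp hm)
  · have : (n : ℚ) ≠ 0 := by exact_mod_cast hn0
    right
    rw [hX, hm, hqn]
    push_cast
    field_simp

open WeierstrassCurve.Affine

theorem W9_equation_iff (x y : ℚ) : W9.Equation x y ↔ y ^ 2 + x * y + y = x ^ 3 + x ^ 2 := by
  simp only [equation_iff, W9]
  constructor <;> intro h <;> linear_combination h

theorem W9_points {x y : ℚ} (h : W9.Equation x y) :
    (x = 0 ∧ y = 0) ∨ (x = -1 ∧ y = 0) ∨ (x = 0 ∧ y = -1) := by
  rw [W9_equation_iff] at h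
  rcases eq_zero_or_eq_four_of_sq_eq (X := 4 * x + 4) (Y := 8 * y + 4 * x + 4)
    (by linear_combination 64 * h) with hx | hx
  · obtain rfl : x = -1 := by linarith
    exact Or.inr (Or.inl ⟨rfl, pow_eq_zero_iff two_ne_zero |>.mp (by linarith)⟩)
  · obtain rfl : x = 0 := by linarith
    rcases mul_eq_zero.mp (show y * (y + 1) = 0 by linarith) with hy | hy
    · exact Or.inl ⟨rfl, hy⟩
    · exact Or.inr (Or.inr ⟨rfl, by linarith⟩)

theorem W9_nonsingular_neg_one_zero : W9.Nonsingular (-1) 0 := by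
  simp only [nonsingular_iff, equation_iff, W9]
  norm_num

theorem W9_nonsingular_zero_neg_one : W9.Nonsingular 0 (-1) := by
  simp only [nonsingular_iff, equation_iff, W9]
  norm_num

theorem W9_two_nsmul : 2 • Point.some _ _ W9_ns = Point.some _ _ W9_nonsingular_neg_one_zero := by
  have hy : (0 : ℚ) ≠ W9.negY 0 0 := by simp [negY, W9]
  rw [two_nsmul, Point.add_self_of_Y_ne hy, Point.some.injEq, slope_of_Y_ne rfl hy]
  simp [addX, addY, negAddY, negY, W9]

theorem W9_neg : -Point.some _ _ W9_ns = Point.some _ _ W9_nonsingular_zero_neg_one := by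
  rw [Point.neg_some, Point.some.injEq]
  simp [negY, W9]

theorem W9_four_nsmul : 4 • Point.some _ _ W9_ns = 0 := by
  rw [show 4 = 2 * 2 by rfl, mul_nsmul, W9_two_nsmul, two_nsmul]
  exact Point.add_self_of_Y_eq (by simp [negY, W9])

/-- The elliptic curve `y² + xy + y = x³ + x²` over `ℚ` has Mordell–Weil group
cyclic of order 4, generated by the point `(0, 0)`. -/
theorem mordell_weil_W9 :
    addOrderOf (WeierstrassCurve.Affine.Point.some _ _ W9_ns) = 4 ∧
      ∀ Q : W9.Point, ∃ k : ℤ, Q = k • WeierstrassCurve.Affine.Point.some _ _ W9_ns := by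
  refine ⟨addOrderOf_eq_prime_pow (p := 2) (n := 1) ?_ W9_four_nsmul, ?_⟩
  · rw [pow_one, W9_two_nsmul]
    exact Point.some_ne_zero _
  rintro (_ | @⟨x, y, h⟩)
  · exact ⟨0, (zero_zsmul _).symm⟩
  · rcases W9_points h.1 with ⟨rfl, rfl⟩ | ⟨rfl, rfl⟩ | ⟨rfl, rfl⟩
    · exact ⟨1, (one_zsmul _).symm⟩
    · exact ⟨2, by rw [two_zsmul, ← two_nsmul, W9_two_nsmul]⟩
    · exact ⟨-1, by rw [neg_one_zsmul, W9_neg]⟩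
end

section
/- The projective conic over Q defined in P² (with coordinates λ, μ, u, where u has weight 1 after dehomogenizing, i.e. the conic u² = 2(λ² + λμ + μ²)) has no rational points; indeed it has no points over Q_2 and no points over Q_3. -/
/-!
Scale a nonzero `ℚ_p`-point by its coordinate of largest norm: it becomes a `ℤ_p`-point with a
unit coordinate, and reducing it modulo `p ^ n` gives a point of the conic over `ZMod (p ^ n)`
with a unit coordinate. For `p = 2, n = 2` and `p = 3, n = 2` a finite check shows that no such
point exists. Modulo `4`: `u` is even, hence `l ^ 2 + l * m + m ^ 2` is even, which forces `l` and
`m` to be even. Modulo `9`: `l ^ 2 + l * m + m ^ 2 = (l - m) ^ 2 + 3 * l * m` and `2` is not a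
square modulo `3`, so `3 ∣ u` and `l ≡ m`; then `9 ∣ u ^ 2` forces `3 ∣ l * m`.
-/

def IsConicPoint {R : Type*} [CommRing R] (l m u : R) : Prop :=
  u ^ 2 = 2 * (l ^ 2 + l * m + m ^ 2)

section IsConicPoint

variable {R S : Type*} [CommRing R] [CommRing S] {l m u : R}

theorem IsConicPoint.map (f : R →+* S) (h : IsConicPoint l m u) :
    IsConicPoint (f l) (f m) (f u) := by
  simpa [IsConicPoint, map_ofNat] using congrArg f h

theorem isConicPoint_map_iff {f : R →+* S} (hf : Function.Injective f) :
    IsConicPoint (f l) (f m) (f u) ↔ IsConicPoint l m u := by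
  refine ⟨fun h => hf ?_, IsConicPoint.map f⟩
  simpa [IsConicPoint, map_ofNat] using h

theorem IsConicPoint.div {K : Type*} [Field K] {l m u : K} (h : IsConicPoint l m u) (c : K) :
    IsConicPoint (l / c) (m / c) (u / c) := by
  unfold IsConicPoint at h ⊢
  linear_combination h / c ^ 2

end IsConicPoint

theorem ZMod.not_isUnit_of_isConicPoint_four (l m u : ZMod (2 ^ 2)) (h : IsConicPoint l m u) :
    ¬(IsUnit l ∨ IsUnit m ∨ IsUnit u) := by
  revert l m u
  unfold IsConicPoint
  decide

theorem ZMod.not_isUnit_of_isConicPoint_nine (l m u : ZMod (3 ^ 2)) (h : IsConicPoint l m u) :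
    ¬(IsUnit l ∨ IsUnit m ∨ IsUnit u) := by
  revert l m u
  unfold IsConicPoint
  decide

section Padic

variable {p : ℕ} [Fact p.Prime] {n : ℕ}

theorem PadicInt.not_isUnit_of_isConicPoint
    (hmod : ∀ l m u : ZMod (p ^ n), IsConicPoint l m u → ¬(IsUnit l ∨ IsUnit m ∨ IsUnit u))
    {l m u : ℤ_[p]} (h : IsConicPoint l m u) : ¬(IsUnit l ∨ IsUnit m ∨ IsUnit u) := by
  let f := PadicInt.toZModPow (p := p) n
  refine fun hunit => hmod _ _ _ (h.map f) ?_
  rcases hunit with hl | hm | hu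
  exacts [Or.inl (hl.map f), Or.inr (Or.inl (hm.map f)), Or.inr (Or.inr (hu.map f))]

theorem Padic.eq_zero_of_isConicPoint
    (hmod : ∀ l m u : ZMod (p ^ n), IsConicPoint l m u → ¬(IsUnit l ∨ IsUnit m ∨ IsUnit u))
    {l m u : ℚ_[p]} (h : IsConicPoint l m u) : (l, m, u) = (0, 0, 0) := by
  obtain ⟨c, hc, hmax⟩ := Set.exists_max_image ({l, m, u} : Set ℚ_[p]) (‖·‖)
    (by simp) (by simp)
  simp only [Set.mem_insert_iff, Set.mem_singleton_iff, forall_eq_or_imp, forall_eq] at hc hmax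
  obtain ⟨hlc, hmc, huc⟩ := hmax
  by_contra hne
  have hc0 : c ≠ 0 := by
    rintro rfl
    simp_all
  have integral {x : ℚ_[p]} (hx : ‖x‖ ≤ ‖c‖) : ‖x / c‖ ≤ 1 := by
    rw [norm_div]
    exact div_le_one_of_le₀ hx (norm_nonneg c)
  let L : ℤ_[p] := ⟨l / c, integral hlc⟩
  let M : ℤ_[p] := ⟨m / c, integral hmc⟩
  let U : ℤ_[p] := ⟨u / c, integral huc⟩
  have hLMU : IsConicPoint L M U :=
    (isConicPoint_map_iff (f := PadicInt.Coe.ringHom) Subtype.coe_injective).mp (h.div c)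
  refine PadicInt.not_isUnit_of_isConicPoint hmod hLMU ?_
  have isUnit_of_coe_eq_one {X : ℤ_[p]} (hX : (X : ℚ_[p]) = 1) : IsUnit X := by
    rw [PadicInt.isUnit_iff, PadicInt.norm_def, hX, norm_one]
  rcases hc with rfl | rfl | rfl
  exacts [Or.inl (isUnit_of_coe_eq_one (div_self hc0)),
    Or.inr (Or.inl (isUnit_of_coe_eq_one (div_self hc0))),
    Or.inr (Or.inr (isUnit_of_coe_eq_one (div_self hc0)))]

end Padic

/-- The conic `u² = 2(λ² + λμ + μ²)` has no nontrivial rational points;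
indeed it has no nontrivial points over `ℚ_2` nor over `ℚ_3`. -/
theorem conic_no_rational_points [Fact (Nat.Prime 2)] [Fact (Nat.Prime 3)] :
    (∀ l m u : ℚ, (l, m, u) ≠ (0, 0, 0) → u ^ 2 ≠ 2 * (l ^ 2 + l * m + m ^ 2)) ∧
    (∀ l m u : ℚ_[2], (l, m, u) ≠ (0, 0, 0) → u ^ 2 ≠ 2 * (l ^ 2 + l * m + m ^ 2)) ∧
    (∀ l m u : ℚ_[3], (l, m, u) ≠ (0, 0, 0) → u ^ 2 ≠ 2 * (l ^ 2 + l * m + m ^ 2)) := by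
  have h2 {l m u : ℚ_[2]} : IsConicPoint l m u → (l, m, u) = (0, 0, 0) :=
    Padic.eq_zero_of_isConicPoint ZMod.not_isUnit_of_isConicPoint_four
  have h3 {l m u : ℚ_[3]} : IsConicPoint l m u → (l, m, u) = (0, 0, 0) :=
    Padic.eq_zero_of_isConicPoint ZMod.not_isUnit_of_isConicPoint_nine
  refine ⟨fun l m u hne h => hne ?_, fun l m u hne h => hne (h2 h), fun l m u hne h => hne (h3 h)⟩
  simpa using h2 (IsConicPoint.map (Rat.castHom ℚ_[2]) h)
end

section
/- Consider five collinear points D', D, T, M_C, C lying on a line r in this order, and a point O not on r. Assume: (1) the angle ∠OTD equals 30°; (2) the angle ∠COD equals 60°; (3) M_C is the midpoint of segment TC; (4) the angle ∠M_C O D' equals 120°. Then D is the midpoint of the segment D'T. -/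
open EuclideanGeometry Real RealInnerProductSpace

lemma aux_sq_cancel {a b : ℝ} (ha : 0 ≤ a) (hb : 0 ≤ b) (h : a^2 = b^2) : a = b := by
  have h2 : (a - b) * (a + b) = 0 := by linear_combination h
  rcases mul_eq_zero.1 h2 with h3 | h3 <;> linarith

lemma cos_angle_pts (p1 p2 p3 : EuclideanSpace ℝ (Fin 2)) :
    Real.cos (EuclideanGeometry.angle p1 p2 p3)
      = ⟪p1 - p2, p3 - p2⟫ / (‖p1 - p2‖ * ‖p3 - p2‖) := by
  rw [EuclideanGeometry.angle, InnerProductGeometry.cos_angle, vsub_eq_sub, vsub_eq_sub]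

lemma my_half_pos (a b y r P : ℝ) (hy : 0 < y) (hr : r^2 = 3) (hrpos : 0 ≤ r) (hab : b < a)
    (hPdef : P = a*b + y^2) (hP : 0 ≤ P)
    (hsq : 4*P^2 = (a^2+y^2)*(b^2+y^2)) :
    r*P = y*(a - b) := by
  apply aux_sq_cancel (mul_nonneg hrpos hP) (by nlinarith)
  subst hPdef
  linear_combination (a*b+y^2)^2 * hr + hsq

lemma my_half_neg (a b y r P : ℝ) (hy : 0 < y) (hr : r^2 = 3) (hrpos : 0 ≤ r) (hab : b < a)
    (hPdef : P = a*b + y^2) (hP : P ≤ 0)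
    (hsq : 4*P^2 = (a^2+y^2)*(b^2+y^2)) :
    r*(-P) = y*(a - b) := by
  apply aux_sq_cancel (mul_nonneg hrpos (by linarith)) (by nlinarith)
  subst hPdef
  linear_combination (a*b+y^2)^2 * hr + hsq

lemma key_algebra (L d d' y r : ℝ) (hL : 0 < L) (hd : 0 < d) (hd' : 0 < d') (hy : 0 < y)
    (hr : r^2 = 3) (hrpos : 0 < r)
    (E1 : r * ((L + r*y) * (r*y - d) + y^2) = y * (L + d))
    (E2 : r * (-((L/2 + r*y) * (r*y - d') + y^2)) = y * (L/2 + d')) :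
    d' = 2*d := by
  have hpos : 0 < 4*y + r*L := by positivity
  have key : d' * (4*y + r*L) = (2*d) * (4*y + r*L) := by
    linear_combination 2*E1 + 2*E2 + (2*d*y - 2*d'*y - L*y) * hr
  exact mul_right_cancel₀ (ne_of_gt hpos) key


set_option maxHeartbeats 1000000

/-- Five collinear points `D', D, T, M, C` in this order on a line, and a point
`O` off the line, with `∠OTD = 30°`, `∠COD = 60°`, `M` the midpoint of `TC`, and
`∠MOD' = 120°`.  Then `D` is the midpoint of `D'T`. -/
theorem euclidean_midpoint
    (D' D T M C O : EuclideanSpace ℝ (Fin 2))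
    (horder₁ : Sbtw ℝ D' D T) (horder₂ : Sbtw ℝ D T M) (horder₃ : Sbtw ℝ T M C)
    (hO : ¬ Collinear ℝ ({T, C, O} : Set (EuclideanSpace ℝ (Fin 2))))
    (hOTD : ∠ O T D = π / 6)
    (hCOD : ∠ C O D = π / 3)
    (hmid : M = midpoint ℝ T C)
    (hMOD' : ∠ M O D' = 2 * π / 3) :
    D = midpoint ℝ D' T := by
  have hTC : T ≠ C := horder₃.left_ne_right
  have he0 : C - T ≠ 0 := sub_ne_zero.2 (Ne.symm hTC)
  obtain ⟨L, hLdef⟩ : ∃ L : ℝ, L = ‖C - T‖ := ⟨_, rfl⟩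
  have hL : 0 < L := hLdef ▸ norm_pos_iff.2 he0
  obtain ⟨u, hudef⟩ : ∃ u : EuclideanSpace ℝ (Fin 2), u = (L⁻¹ : ℝ) • (C - T) := ⟨_, rfl⟩
  have hu : ‖u‖ = 1 := by rw [hudef, hLdef]; exact norm_smul_inv_norm he0
  have hC : C - T = L • u := by
    rw [hudef, smul_smul, mul_inv_cancel₀ (ne_of_gt hL), one_smul]
  have hM : M - T = (L/2) • u := by
    rw [hmid, ← vsub_eq_sub, midpoint_vsub_left, vsub_eq_sub, hC, smul_smul]
    norm_num
    ring_nf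
  -- extract d with D - T = -d • u
  obtain ⟨t, ht, hTeq⟩ := horder₂.mem_image_Ioo
  have h1t : (0:ℝ) < 1 - t := by linarith [ht.2]
  have htD : (1 - t) • (D - T) = (-(t * (L/2))) • u := by
    rw [AffineMap.lineMap_apply_module] at hTeq
    calc (1-t) • (D - T) = (-t) • (M - T) := by rw [← hTeq]; module
    _ = (-(t * (L/2))) • u := by rw [hM, smul_smul]; ring_nf
  obtain ⟨d, hddef⟩ : ∃ d : ℝ, d = t * (L/2) / (1 - t) := ⟨_, rfl⟩
  have hd : 0 < d := hddef ▸ div_pos (mul_pos ht.1 (by positivity)) h1t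
  have hD : D - T = (-d) • u := by
    have h2 : D - T = ((1-t)⁻¹ * (-(t*(L/2)))) • u := by
      rw [← smul_smul, ← htD, inv_smul_smul₀ (ne_of_gt h1t)]
    rw [h2]
    congr 1
    rw [hddef]
    ring_nf
  -- extract d' with D' - T = -d' • u
  obtain ⟨s, hs, hDeq⟩ := horder₁.mem_image_Ioo
  have h1s : (0:ℝ) < 1 - s := by linarith [hs.2]
  have hsD : (1 - s) • (D' - T) = D - T := by
    rw [AffineMap.lineMap_apply_module] at hDeq
    rw [← hDeq]; module
  obtain ⟨d', hd'def⟩ : ∃ d' : ℝ, d' = d / (1 - s) := ⟨_, rfl⟩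
  have hd' : 0 < d' := hd'def ▸ div_pos hd h1s
  have hD' : D' - T = (-d') • u := by
    have h2 : D' - T = ((1-s)⁻¹ * (-d)) • u := by
      rw [← smul_smul, ← hD, ← hsD, inv_smul_smul₀ (ne_of_gt h1s)]
    rw [h2]
    congr 1
    rw [hd'def]
    ring_nf
  -- decompose O
  obtain ⟨X, hXdef⟩ : ∃ X : ℝ, X = ⟪O - T, u⟫ := ⟨_, rfl⟩
  obtain ⟨f, hfdef⟩ : ∃ f : EuclideanSpace ℝ (Fin 2), f = O - T - X • u := ⟨_, rfl⟩
  have huu : ⟪u, u⟫ = (1:ℝ) := by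
    rw [real_inner_self_eq_norm_sq, hu]; norm_num
  have hfu : ⟪f, u⟫ = 0 := by
    rw [hfdef, inner_sub_left, real_inner_smul_left, huu, hXdef]; ring
  have huf : ⟪u, f⟫ = 0 := by rw [real_inner_comm]; exact hfu
  have hOT : O - T = X • u + f := by rw [hfdef]; module
  have hf0 : f ≠ 0 := by
    intro hf
    apply hO
    have hOeq : O - T = X • u := by rw [hOT, hf, add_zero]
    rw [collinear_iff_of_mem (Set.mem_insert T _)]
    refine ⟨u, fun p hp => ?_⟩
    simp only [Set.mem_insert_iff, Set.mem_singleton_iff] at hp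
    rcases hp with rfl | rfl | rfl
    · exact ⟨0, by simp⟩
    · exact ⟨L, by rw [vadd_eq_add, ← hC]; abel⟩
    · exact ⟨X, by rw [vadd_eq_add, ← hOeq]; abel⟩
  obtain ⟨y, hydef⟩ : ∃ y : ℝ, y = ‖f‖ := ⟨_, rfl⟩
  have hy : 0 < y := hydef ▸ norm_pos_iff.2 hf0
  -- sqrt 3
  obtain ⟨r, hrdef⟩ : ∃ r : ℝ, r = Real.sqrt 3 := ⟨_, rfl⟩
  have hr3 : r ^ 2 = 3 := by rw [hrdef]; exact Real.sq_sqrt (by norm_num)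
  have hrpos : 0 < r := hrdef ▸ Real.sqrt_pos.2 (by norm_num)
  -- angle at T
  have hcos1 := cos_angle_pts O T D
  rw [hOTD, Real.cos_pi_div_six] at hcos1
  have hip1 : ⟪O - T, D - T⟫ = -(X*d) := by
    rw [hOT, hD]
    simp only [inner_add_left, real_inner_smul_left, real_inner_smul_right, huu, hfu]
    ring
  have hnD : ‖D - T‖ = d := by
    rw [hD, norm_smul, hu, mul_one, Real.norm_eq_abs, abs_neg, abs_of_pos hd]
  have hn1sq : ‖O - T‖^2 = X^2 + y^2 := by
    rw [hOT, norm_add_sq_real, norm_smul, hu, mul_one, real_inner_smul_left, huf,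
      Real.norm_eq_abs, sq_abs, hydef]
    ring
  obtain ⟨n1, hn1def⟩ : ∃ n1 : ℝ, n1 = ‖O - T‖ := ⟨_, rfl⟩
  have hn1nn : 0 ≤ n1 := hn1def ▸ norm_nonneg _
  rw [← hn1def] at hn1sq
  have hn1pos : 0 < n1 := by nlinarith only [hn1sq, hy, hn1nn]
  rw [hip1, hnD, ← hrdef, ← hn1def] at hcos1
  have hXeq : X = -(r/2 * n1) := by
    have hne : n1 * d ≠ 0 := ne_of_gt (mul_pos hn1pos hd)
    rw [eq_div_iff hne] at hcos1
    have h3 : (r/2 * n1 + X) * d = 0 := by linear_combination hcos1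
    rcases mul_eq_zero.1 h3 with h4 | h4
    · linarith
    · exact absurd h4 (ne_of_gt hd)
  have hX2 : X^2 = 3*y^2 := by
    have h5 : X^2 = 3/4 * n1^2 := by
      rw [hXeq]; linear_combination (n1^2/4) * hr3
    rw [hn1sq] at h5
    linarith
  have hXneg : X ≤ 0 := by
    have h6 : 0 < r/2 * n1 := by positivity
    linarith [hXeq.le, hXeq.ge]
  have hXy : X = -(r*y) := by
    have h7 : -X = r*y := by
      apply aux_sq_cancel (by linarith) (by positivity)
      linear_combination hX2 - y^2*hr3
    linarith
  -- vectors from O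
  have hCO : C - O = (L - X) • u - f := by
    have h8 : C - O = (C - T) - (O - T) := by abel
    rw [h8, hC, hOT]; module
  have hDO : D - O = (-d - X) • u - f := by
    have h8 : D - O = (D - T) - (O - T) := by abel
    rw [h8, hD, hOT]; module
  have hMO : M - O = (L/2 - X) • u - f := by
    have h8 : M - O = (M - T) - (O - T) := by abel
    rw [h8, hM, hOT]; module
  have hD'O : D' - O = (-d' - X) • u - f := by
    have h8 : D' - O = (D' - T) - (O - T) := by abel
    rw [h8, hD', hOT]; module
  -- generic inner product / norm formulas
  have hipg : ∀ a b : ℝ, ⟪a • u - f, b • u - f⟫ = a*b + y^2 := by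
    intro a b
    simp only [inner_sub_left, inner_sub_right, real_inner_smul_left, real_inner_smul_right,
      huu, hfu, huf, real_inner_self_eq_norm_sq, hydef]
    ring
  have hng : ∀ a : ℝ, ‖a • u - f‖^2 = a^2 + y^2 := by
    intro a
    rw [← real_inner_self_eq_norm_sq, hipg]; ring
  have hnpos : ∀ a : ℝ, 0 < ‖a • u - f‖ := by
    intro a
    have h1 := hng a
    have h2 : (0:ℝ) ≤ ‖a • u - f‖ := norm_nonneg _
    nlinarith only [hy, sq_nonneg a, h1, h2]
  -- angle C O D
  have hcos2 := cos_angle_pts C O D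
  rw [hCOD, Real.cos_pi_div_three, hCO, hDO, hipg] at hcos2
  obtain ⟨nC, hnCdef⟩ : ∃ nC : ℝ, nC = ‖(L - X) • u - f‖ := ⟨_, rfl⟩
  obtain ⟨nD2, hnD2def⟩ : ∃ nD2 : ℝ, nD2 = ‖(-d - X) • u - f‖ := ⟨_, rfl⟩
  rw [← hnCdef, ← hnD2def] at hcos2
  have hnCpos : 0 < nC := hnCdef ▸ hnpos _
  have hnD2pos : 0 < nD2 := hnD2def ▸ hnpos _
  have hnCsq : nC^2 = (L - X)^2 + y^2 := by rw [hnCdef]; exact hng _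
  have hnD2sq : nD2^2 = (-d - X)^2 + y^2 := by rw [hnD2def]; exact hng _
  have hprod2 : 2*((L - X)*(-d - X) + y^2) = nC * nD2 := by
    rw [eq_div_iff (ne_of_gt (mul_pos hnCpos hnD2pos))] at hcos2
    linarith only [hcos2]
  have hP2 : 0 ≤ (L - X)*(-d - X) + y^2 := by nlinarith only [mul_pos hnCpos hnD2pos, hprod2]
  have hsq2 : 4*((L - X)*(-d - X) + y^2)^2 = ((L - X)^2 + y^2)*((-d - X)^2 + y^2) := by
    have h6 : (2*((L - X)*(-d - X) + y^2))^2 = nC^2 * nD2^2 := by rw [hprod2]; ring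
    rw [hnCsq, hnD2sq] at h6
    linear_combination h6
  have E1x : r * ((L - X)*(-d - X) + y^2) = y * ((L - X) - (-d - X)) :=
    my_half_pos _ _ _ _ _ hy hr3 (le_of_lt hrpos) (by linarith) rfl hP2 hsq2
  rw [hXy] at E1x
  have E1 : r * ((L + r*y) * (r*y - d) + y^2) = y * (L + d) := by linear_combination E1x
  -- angle M O D'
  have hcval : Real.cos (2*π/3) = -(1/2) := by
    rw [show (2*π/3 : ℝ) = π - π/3 by ring, Real.cos_pi_sub, Real.cos_pi_div_three]
  have hcos3 := cos_angle_pts M O D'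
  rw [hMOD', hcval, hMO, hD'O, hipg] at hcos3
  obtain ⟨nM, hnMdef⟩ : ∃ nM : ℝ, nM = ‖(L/2 - X) • u - f‖ := ⟨_, rfl⟩
  obtain ⟨nF, hnFdef⟩ : ∃ nF : ℝ, nF = ‖(-d' - X) • u - f‖ := ⟨_, rfl⟩
  rw [← hnMdef, ← hnFdef] at hcos3
  have hnMpos : 0 < nM := hnMdef ▸ hnpos _
  have hnFpos : 0 < nF := hnFdef ▸ hnpos _
  have hnMsq : nM^2 = (L/2 - X)^2 + y^2 := by rw [hnMdef]; exact hng _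
  have hnFsq : nF^2 = (-d' - X)^2 + y^2 := by rw [hnFdef]; exact hng _
  have hprod3 : -(2*((L/2 - X)*(-d' - X) + y^2)) = nM * nF := by
    rw [eq_div_iff (ne_of_gt (mul_pos hnMpos hnFpos))] at hcos3
    linarith only [hcos3]
  have hP3 : (L/2 - X)*(-d' - X) + y^2 ≤ 0 := by nlinarith only [mul_pos hnMpos hnFpos, hprod3]
  have hsq3 : 4*((L/2 - X)*(-d' - X) + y^2)^2 = ((L/2 - X)^2 + y^2)*((-d' - X)^2 + y^2) := by
    have h6 : (2*((L/2 - X)*(-d' - X) + y^2))^2 = nM^2 * nF^2 := by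
      have : (2*((L/2 - X)*(-d' - X) + y^2))^2 = (-(2*((L/2 - X)*(-d' - X) + y^2)))^2 := by ring
      rw [this, hprod3]; ring
    rw [hnMsq, hnFsq] at h6
    linear_combination h6
  have E2x : r * (-((L/2 - X)*(-d' - X) + y^2)) = y * ((L/2 - X) - (-d' - X)) :=
    my_half_neg _ _ _ _ _ hy hr3 (le_of_lt hrpos) (by linarith) rfl hP3 hsq3
  rw [hXy] at E2x
  have E2 : r * (-((L/2 + r*y) * (r*y - d') + y^2)) = y * (L/2 + d') := by linear_combination E2x
  -- conclude
  have hfin : d' = 2*d := key_algebra L d d' y r hL hd hd' hy hr3 hrpos E1 E2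
  have hDT2 : D - T = midpoint ℝ D' T - T := by
    rw [← vsub_eq_sub (midpoint ℝ D' T), midpoint_vsub_right, vsub_eq_sub, hD', hD, hfin,
      smul_smul]
    congr 1
    norm_num
    ring
  exact sub_left_inj.1 hDT2
end

section
/- Let τ1, τ2 be complex numbers generating 2-dimensional Q-subspaces V1 = ⟨1, τ1⟩_Q and V2 = ⟨1, τ2⟩_Q of C. If the four complex numbers 1, τ1, τ2, τ1τ2 are linearly dependent over Q and both τ1 + τ2 and τ1 τ2 lie in a common 2-dimensional Q-subspace of C containing 1, then V1 and V2 are homothetic; in particular, if τ1, τ2 are the two roots of a quadratic polynomial with coefficients in a 2-dimensional Q-subspace W of C containing 1, then ⟨1,τ1⟩_Q and ⟨1,τ2⟩_Q are homothetic. -/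
/-- Two `ℚ`-subspaces of `ℂ` are homothetic if one is carried onto the other by
multiplication by a fixed nonzero complex number. -/
def HomotheticQSpaces (V₁ V₂ : Submodule ℚ ℂ) : Prop :=
  ∃ l : ℂ, l ≠ 0 ∧ (fun z : ℂ => l * z) '' (V₁ : Set ℂ) = (V₂ : Set ℂ)

open Module Submodule

lemma rat_indep {τ : ℂ} (h : Module.finrank ℚ ↥(Submodule.span ℚ ({1, τ} : Set ℂ)) = 2)
    {q r : ℚ} (hqr : (q : ℂ) + r * τ = 0) : q = 0 ∧ r = 0 := by
  by_cases hr : r = 0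
  · refine ⟨?_, hr⟩
    rw [hr] at hqr; push_cast at hqr; exact_mod_cast by simpa using hqr
  · exfalso
    have hr' : (r:ℂ) ≠ 0 := by exact_mod_cast hr
    have hτC : τ = -((q:ℂ)/(r:ℂ)) := by
      field_simp
      linear_combination hqr
    have hτ : τ = (-(q/r) : ℚ) • (1 : ℂ) := by
      rw [Rat.smul_def]
      push_cast
      rw [hτC]; ring
    have hspan : Submodule.span ℚ ({1, τ} : Set ℂ) = Submodule.span ℚ ({1} : Set ℂ) := by
      apply le_antisymm
      · rw [Submodule.span_le]
        rintro x (rfl | rfl)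
        · exact Submodule.subset_span rfl
        · rw [hτ]
          exact Submodule.smul_mem _ _ (Submodule.subset_span rfl)
      · exact Submodule.span_mono (by simp)
    rw [hspan] at h
    have : Module.finrank ℚ ↥(Submodule.span ℚ ({1} : Set ℂ)) = 1 :=
      finrank_span_singleton one_ne_zero
    omega

/-- Key criterion: a nontrivial rational dependence among 1, τ₁, τ₂, τ₁τ₂ gives homothety. -/
lemma key (τ₁ τ₂ : ℂ)
    (h1 : Module.finrank ℚ ↥(Submodule.span ℚ ({1, τ₁} : Set ℂ)) = 2)
    (h2 : Module.finrank ℚ ↥(Submodule.span ℚ ({1, τ₂} : Set ℂ)) = 2)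
    (a b c d : ℚ)
    (hdep : (a : ℂ) + b * τ₁ + c * τ₂ + d * (τ₁ * τ₂) = 0)
    (hne : ¬ (a = 0 ∧ b = 0 ∧ c = 0 ∧ d = 0)) :
    ∃ l : ℂ, l ≠ 0 ∧ (fun z : ℂ => l * z) '' (Submodule.span ℚ ({1, τ₁} : Set ℂ) : Set ℂ)
      = (Submodule.span ℚ ({1, τ₂} : Set ℂ) : Set ℂ) := by
  set V₁ := Submodule.span ℚ ({1, τ₁} : Set ℂ)
  set V₂ := Submodule.span ℚ ({1, τ₂} : Set ℂ)
  haveI : FiniteDimensional ℚ ↥V₁ := FiniteDimensional.span_of_finite ℚ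
    ((Set.finite_singleton τ₁).insert 1)
  haveI : FiniteDimensional ℚ ↥V₂ := FiniteDimensional.span_of_finite ℚ
    ((Set.finite_singleton τ₂).insert 1)
  set l : ℂ := (d : ℂ) * τ₂ + (b : ℂ) with hl
  have hlne : l ≠ 0 := by
    intro h0
    have hdb : b = 0 ∧ d = 0 := rat_indep h2 (by rw [← h0, hl]; ring)
    have hac : a = 0 ∧ c = 0 := rat_indep h2 (by
      have := hdep
      rw [hdb.1, hdb.2] at this
      push_cast at this ⊢
      linear_combination this)
    exact hne ⟨hac.1, hdb.1, hac.2, hdb.2⟩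
  refine ⟨l, hlne, ?_⟩
  have hmem1 : l * 1 ∈ V₂ := by
    have : l * 1 = (b : ℚ) • (1 : ℂ) + (d : ℚ) • τ₂ := by
      simp [hl, Rat.smul_def]; ring
    rw [this]
    exact Submodule.add_mem _ (Submodule.smul_mem _ _ (Submodule.subset_span (by simp)))
      (Submodule.smul_mem _ _ (Submodule.subset_span (by simp)))
  have hmem2 : l * τ₁ ∈ V₂ := by
    have : l * τ₁ = (-a : ℚ) • (1 : ℂ) + (-c : ℚ) • τ₂ := by
      simp only [Rat.smul_def, hl]
      push_cast
      linear_combination hdep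
    rw [this]
    exact Submodule.add_mem _ (Submodule.smul_mem _ _ (Submodule.subset_span (by simp)))
      (Submodule.smul_mem _ _ (Submodule.subset_span (by simp)))
  set f : ℂ →ₗ[ℚ] ℂ := LinearMap.mulLeft ℚ l
  have hinj : Function.Injective f := fun x y hxy => by
    simpa [f, LinearMap.mulLeft_apply, mul_right_inj' hlne] using hxy
  have hle : Submodule.map f V₁ ≤ V₂ := by
    rw [Submodule.map_span, Submodule.span_le]
    rintro x ⟨y, (rfl | rfl), rfl⟩
    · exact hmem1
    · exact hmem2
  have hfr : Module.finrank ℚ ↥(Submodule.map f V₁) = 2 := by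
    rw [← h1]
    exact (Submodule.equivMapOfInjective f hinj V₁).finrank_eq.symm
  have heq : Submodule.map f V₁ = V₂ :=
    Submodule.eq_of_le_of_finrank_le hle (by rw [hfr, h2])
  have : (Submodule.map f V₁ : Set ℂ) = (fun z : ℂ => l * z) '' (V₁ : Set ℂ) := by
    ext x
    simp [Submodule.map_coe, f, LinearMap.mulLeft_apply]
  rw [← this, heq]

/-- Given a 2-dimensional subspace containing 1, τ₁+τ₂ and τ₁τ₂, produce a rational dependence. -/
lemma dep_of_W (τ₁ τ₂ : ℂ) (W : Submodule ℚ ℂ) (hW : Module.finrank ℚ ↥W = 2)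
    (h1W : (1 : ℂ) ∈ W) (hsW : τ₁ + τ₂ ∈ W) (hpW : τ₁ * τ₂ ∈ W) :
    ∃ a b c d : ℚ, ((a : ℂ) + b * τ₁ + c * τ₂ + d * (τ₁ * τ₂) = 0) ∧
      ¬ (a = 0 ∧ b = 0 ∧ c = 0 ∧ d = 0) := by
  haveI : FiniteDimensional ℚ ↥W := FiniteDimensional.of_finrank_pos (by omega)
  set v : Fin 3 → ↥W := ![⟨1, h1W⟩, ⟨τ₁ + τ₂, hsW⟩, ⟨τ₁ * τ₂, hpW⟩] with hv
  have hnli : ¬ LinearIndependent ℚ v := by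
    intro hli
    have := hli.fintype_card_le_finrank
    rw [hW] at this
    simp at this
  rw [Fintype.not_linearIndependent_iff] at hnli
  obtain ⟨g, hsum, i, hi⟩ := hnli
  have hsum' : (g 0 : ℂ) * 1 + (g 1 : ℂ) * (τ₁ + τ₂) + (g 2 : ℂ) * (τ₁ * τ₂) = 0 := by
    have := congrArg (Subtype.val) hsum
    simp only [hv, Fin.sum_univ_three, Matrix.cons_val_zero, Matrix.cons_val_one,
      Matrix.head_cons, Matrix.cons_val_two, Matrix.tail_cons] at this
    simp only [Submodule.coe_add, Submodule.coe_smul, ZeroMemClass.coe_zero] at this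
    simp only [Rat.smul_def] at this
    push_cast at this ⊢
    linear_combination this
  refine ⟨g 0, g 1, g 1, g 2, by push_cast; linear_combination hsum', ?_⟩
  rintro ⟨h0, h1, -, h2⟩
  fin_cases i <;> simp_all

theorem roots_of_quadratic_homothetic' :
    (∀ τ₁ τ₂ : ℂ,
      Module.finrank ℚ ↥(Submodule.span ℚ ({1, τ₁} : Set ℂ)) = 2 →
      Module.finrank ℚ ↥(Submodule.span ℚ ({1, τ₂} : Set ℂ)) = 2 →
      ¬ LinearIndependent ℚ ![(1 : ℂ), τ₁, τ₂, τ₁ * τ₂] →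
      (∃ W : Submodule ℚ ℂ, Module.finrank ℚ ↥W = 2 ∧ (1 : ℂ) ∈ W ∧
        τ₁ + τ₂ ∈ W ∧ τ₁ * τ₂ ∈ W) →
      ∃ l : ℂ, l ≠ 0 ∧ (fun z : ℂ => l * z) '' (Submodule.span ℚ ({1, τ₁} : Set ℂ) : Set ℂ)
        = (Submodule.span ℚ ({1, τ₂} : Set ℂ) : Set ℂ)) ∧
    (∀ τ₁ τ₂ : ℂ,
      Module.finrank ℚ ↥(Submodule.span ℚ ({1, τ₁} : Set ℂ)) = 2 →
      Module.finrank ℚ ↥(Submodule.span ℚ ({1, τ₂} : Set ℂ)) = 2 →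
      τ₁ ≠ τ₂ →
      (∃ W : Submodule ℚ ℂ, Module.finrank ℚ ↥W = 2 ∧ (1 : ℂ) ∈ W ∧
        ∃ a b c : ℂ, a ∈ W ∧ b ∈ W ∧ c ∈ W ∧ a ≠ 0 ∧
          a * τ₁ ^ 2 + b * τ₁ + c = 0 ∧ a * τ₂ ^ 2 + b * τ₂ + c = 0) →
      ∃ l : ℂ, l ≠ 0 ∧ (fun z : ℂ => l * z) '' (Submodule.span ℚ ({1, τ₁} : Set ℂ) : Set ℂ)
        = (Submodule.span ℚ ({1, τ₂} : Set ℂ) : Set ℂ)) := by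
  constructor
  · intro τ₁ τ₂ h1 h2 hnli _
    rw [Fintype.not_linearIndependent_iff] at hnli
    obtain ⟨g, hsum, i, hi⟩ := hnli
    have hsum' : (g 0 : ℂ) + (g 1 : ℂ) * τ₁ + (g 2 : ℂ) * τ₂ + (g 3 : ℂ) * (τ₁ * τ₂) = 0 := by
      simp only [Fin.sum_univ_four, Matrix.cons_val_zero, Matrix.cons_val_one,
        Matrix.head_cons, Matrix.cons_val_two, Matrix.tail_cons, Matrix.cons_val_three,
        Rat.smul_def] at hsum
      linear_combination hsum
    refine key τ₁ τ₂ h1 h2 _ _ _ _ hsum' ?_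
    rintro ⟨h0, ha, hb, hc⟩
    fin_cases i <;> simp_all
  · rintro τ₁ τ₂ h1 h2 hne ⟨W, hW, h1W, a, b, c, ha, hb, hc, ha0, he1, he2⟩
    have htne : τ₁ - τ₂ ≠ 0 := sub_ne_zero.mpr hne
    have hs : a * (τ₁ + τ₂) = -b := by
      have h3 : (τ₁ - τ₂) * (a * (τ₁ + τ₂) + b) = 0 := by linear_combination he1 - he2
      rcases mul_eq_zero.mp h3 with h | h
      · exact absurd h htne
      · linear_combination h
    have hp : a * (τ₁ * τ₂) = c := by linear_combination -he1 + τ₁ * hs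
    set f : ℂ →ₗ[ℚ] ℂ := LinearMap.mulLeft ℚ (a⁻¹) with hf
    have hinj : Function.Injective f := fun x y hxy =>
      mul_right_injective₀ (inv_ne_zero ha0) (by simpa [hf] using hxy)
    set W' := Submodule.map f W with hWdef
    have hW' : Module.finrank ℚ ↥W' = 2 := by
      rw [← hW]; exact (Submodule.equivMapOfInjective f hinj W).finrank_eq.symm
    have h1' : (1 : ℂ) ∈ W' := ⟨a, ha, by simp [hf]; exact inv_mul_cancel₀ ha0⟩
    have hs' : τ₁ + τ₂ ∈ W' := ⟨-b, neg_mem hb, by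
      simp only [hf, LinearMap.mulLeft_apply]
      rw [← hs, inv_mul_cancel_left₀ ha0]⟩
    have hp' : τ₁ * τ₂ ∈ W' := ⟨c, hc, by
      simp only [hf, LinearMap.mulLeft_apply]
      rw [← hp, inv_mul_cancel_left₀ ha0]⟩
    obtain ⟨q0, q1, q2, q3, hdep, hneq⟩ := dep_of_W τ₁ τ₂ W' hW' h1' hs' hp'
    exact key τ₁ τ₂ h1 h2 _ _ _ _ hdep hneq

/-- If `τ₁, τ₂` generate 2-dimensional `ℚ`-subspaces `⟨1,τ₁⟩`, `⟨1,τ₂⟩` of `ℂ`,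
the four numbers `1, τ₁, τ₂, τ₁τ₂` are `ℚ`-linearly dependent, and `τ₁ + τ₂` and `τ₁τ₂` lie in
a common 2-dimensional `ℚ`-subspace containing `1`, then the two spaces are homothetic.
In particular, if `τ₁ ≠ τ₂` are the two roots of a quadratic polynomial with coefficients in a
2-dimensional `ℚ`-subspace `W` containing `1`, then `⟨1,τ₁⟩` and `⟨1,τ₂⟩` are homothetic. -/
theorem roots_of_quadratic_homothetic :
    (∀ τ₁ τ₂ : ℂ,
      Module.finrank ℚ ↥(Submodule.span ℚ ({1, τ₁} : Set ℂ)) = 2 →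
      Module.finrank ℚ ↥(Submodule.span ℚ ({1, τ₂} : Set ℂ)) = 2 →
      ¬ LinearIndependent ℚ ![(1 : ℂ), τ₁, τ₂, τ₁ * τ₂] →
      (∃ W : Submodule ℚ ℂ, Module.finrank ℚ ↥W = 2 ∧ (1 : ℂ) ∈ W ∧
        τ₁ + τ₂ ∈ W ∧ τ₁ * τ₂ ∈ W) →
      HomotheticQSpaces (Submodule.span ℚ ({1, τ₁} : Set ℂ))
        (Submodule.span ℚ ({1, τ₂} : Set ℂ))) ∧
    (∀ τ₁ τ₂ : ℂ,
      Module.finrank ℚ ↥(Submodule.span ℚ ({1, τ₁} : Set ℂ)) = 2 →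
      Module.finrank ℚ ↥(Submodule.span ℚ ({1, τ₂} : Set ℂ)) = 2 →
      τ₁ ≠ τ₂ →
      (∃ W : Submodule ℚ ℂ, Module.finrank ℚ ↥W = 2 ∧ (1 : ℂ) ∈ W ∧
        ∃ a b c : ℂ, a ∈ W ∧ b ∈ W ∧ c ∈ W ∧ a ≠ 0 ∧
          a * τ₁ ^ 2 + b * τ₁ + c = 0 ∧ a * τ₂ ^ 2 + b * τ₂ + c = 0) →
      HomotheticQSpaces (Submodule.span ℚ ({1, τ₁} : Set ℂ))
        (Submodule.span ℚ ({1, τ₂} : Set ℂ))) := roots_of_quadratic_homothetic'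
end
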